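/- arXiv:2111.07721 — 8 statements merged into one kernel-verified Lean document; each statement's English description precedes it below -/
import Mathlib

section
/- Let N be a numerical semigroup with minimal system of generators n_1 < n_2 < ... < n_r. Then the effective weight of N satisfies ewt(N) = Σ_{ℓ ∉ End(N)} #A_ℓ, where the sum runs over all positive integers ℓ not belonging to End(N). -/
/-!
Both sides count pairs `(i, m)` with `m` a gap and `nᵢ < m`: the left side grouped by `m`, the
right side, after the substitution `m = nᵢ + ℓ`, grouped by `ℓ`. The restriction `ℓ ∉ End(N)` on
the right is harmless, because `nᵢ + ℓ ∉ N` with `nᵢ ∈ N \ {0}` already forces `ℓ ∉ End(N)`.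
-/

open Finset in
theorem finsum_mem_ncard_setOf_eq_sum {α ι : Type*} [Fintype ι] (s : Set α) (P : α → ι → Prop)
    (hP : ∀ i, {a | a ∈ s ∧ P a i}.Finite) :
    ∑ᶠ a ∈ s, {i | P a i}.ncard = ∑ i, {a | a ∈ s ∧ P a i}.ncard := by
  classical
  have ht : (⋃ i, {a | a ∈ s ∧ P a i}).Finite := Set.finite_iUnion hP
  rw [finsum_mem_eq_sum_of_inter_support_eq (t := ht.toFinset)]
  · calc ∑ a ∈ ht.toFinset, {i | P a i}.ncard
        = ∑ a ∈ ht.toFinset, #(univ.filter (P a)) := by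
          simp [Set.ncard_eq_toFinset_card']
      _ = ∑ i, #(ht.toFinset.filter (P · i)) :=
          sum_card_bipartiteAbove_eq_sum_card_bipartiteBelow _
      _ = ∑ i, {a | a ∈ s ∧ P a i}.ncard := by
          refine sum_congr rfl fun i _ => ?_
          rw [← Set.ncard_coe_finset]
          congr 1
          ext a
          simpa using fun h _ => ⟨i, h⟩
  · ext a
    simp only [Set.Finite.coe_toFinset, Set.mem_iUnion, Set.mem_ofPred_eq, Set.mem_inter_iff,
      Function.mem_support]
    exact and_congr_left fun h =>
      ⟨fun hs => (Set.nonempty_of_ncard_ne_zero h).imp fun _ hi => ⟨hs, hi⟩, fun ⟨_, hs, _⟩ => hs⟩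

theorem ncard_setOf_pos_add_mem (S : Set ℕ) (a : ℕ) :
    {ℓ | 0 < ℓ ∧ a + ℓ ∈ S}.ncard = {m | m ∈ S ∧ a < m}.ncard := by
  rw [← Set.ncard_image_of_injective _ (add_right_injective a)]
  congr 1
  ext m
  constructor
  · rintro ⟨ℓ, ⟨hℓ, hS⟩, rfl⟩
    exact ⟨hS, Nat.lt_add_of_pos_right hℓ⟩
  · rintro ⟨hS, ham⟩
    exact ⟨m - a, ⟨by omega, by rwa [Nat.add_sub_cancel' ham.le]⟩, Nat.add_sub_cancel' ham.le⟩

theorem effective_weight_eq_sum_card_A_general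
    (N : Set ℕ)
    (hfin : (Nᶜ : Set ℕ).Finite)
    (r : ℕ) (n : Fin r → ℕ)
    (hgen : N = (AddSubmonoid.closure (Set.range n) : Set ℕ))
    (hmin : ∀ i : Fin r, n i ∉ AddSubmonoid.closure (Set.range n \ {n i})) :
    (∑ᶠ ℓ ∈ (Nᶜ : Set ℕ), {i : Fin r | n i < ℓ}.ncard)
      = ∑ᶠ ℓ ∈ {ℓ : ℕ | 0 < ℓ ∧ ¬ (∀ s ∈ N, s ≠ 0 → ℓ + s ∈ N)},
          {i : Fin r | n i + ℓ ∉ N}.ncard := by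
  have hn_mem : ∀ i, n i ∈ N := fun i => hgen ▸ AddSubmonoid.subset_closure ⟨i, rfl⟩
  have hn_ne : ∀ i, n i ≠ 0 := fun i h => hmin i (h ▸ zero_mem _)
  have hA_not_end : ∀ ℓ, {i : Fin r | n i + ℓ ∉ N}.ncard ≠ 0 → ¬ ∀ s ∈ N, s ≠ 0 → ℓ + s ∈ N :=
    fun ℓ hℓ hall => by
      obtain ⟨i, hi⟩ := Set.nonempty_of_ncard_ne_zero hℓ
      exact hi (add_comm ℓ (n i) ▸ hall (n i) (hn_mem i) (hn_ne i))
  refine Eq.trans ?_ <| finsum_mem_inter_support_eq' _ {ℓ | 0 < ℓ} _ fun ℓ hℓ =>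
    ⟨(⟨·, hA_not_end ℓ hℓ⟩), And.left⟩
  rw [finsum_mem_ncard_setOf_eq_sum _ (fun ℓ i => n i < ℓ) fun _ => hfin.subset fun _ => And.left,
    finsum_mem_ncard_setOf_eq_sum _ (fun ℓ i => n i + ℓ ∉ N) fun i =>
      (hfin.preimage (add_right_injective (n i)).injOn).subset fun _ => And.right]
  exact Finset.sum_congr rfl fun i _ => (ncard_setOf_pos_add_mem Nᶜ (n i)).symm

/-- Let `N` be a numerical semigroup with minimal system of generators
`n₁ < ⋯ < n_r`.  Then `ewt(N) = Σ_{ℓ ∉ End(N)} #A_ℓ`, where the sum runs over all positive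
integers `ℓ` not belonging to `End(N)`.  Here `End(N) = {n : n + s ∈ N for all 0 ≠ s ∈ N}`,
`ewt(N) = Σ_{gaps ℓ} #{i : nᵢ < ℓ}` and `A_ℓ = {i : nᵢ + ℓ ∉ N}`. -/
theorem effective_weight_eq_sum_card_A
    (N : Set ℕ) (h0 : (0 : ℕ) ∈ N)
    (hadd : ∀ a ∈ N, ∀ b ∈ N, a + b ∈ N)
    (hfin : (Nᶜ : Set ℕ).Finite)
    (r : ℕ) (n : Fin r → ℕ) (hmono : StrictMono n)
    (hgen : N = (AddSubmonoid.closure (Set.range n) : Set ℕ))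
    (hmin : ∀ i : Fin r, n i ∉ AddSubmonoid.closure (Set.range n \ {n i})) :
    (∑ᶠ ℓ ∈ (Nᶜ : Set ℕ), {i : Fin r | n i < ℓ}.ncard)
      = ∑ᶠ ℓ ∈ {ℓ : ℕ | 0 < ℓ ∧ ¬ (∀ s ∈ N, s ≠ 0 → ℓ + s ∈ N)},
          {i : Fin r | n i + ℓ ∉ N}.ncard :=
  effective_weight_eq_sum_card_A_general N hfin r n hgen hmin
end

section
/- Let N be a symmetric numerical semigroup of multiplicity m ≥ 3 (i.e. m is the smallest nonzero element of N). Then N can be generated by at most m − 1 elements; that is, any minimal system of generators of N has at most m − 1 elements. -/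
/-!
Call `x` indecomposable in `S` if it is not a sum of two nonzero elements of `S`; minimal
generators are indecomposable, and two indecomposable elements congruent modulo `m ∈ S` coincide,
since the larger one is the smaller plus a multiple of `m`. So the generators have pairwise
distinct residues modulo `m`, and it remains to see that the residue of the Frobenius number `F`
is not taken. A generator in that class is at least `F + m`, and above `F + m` it splits off `m`.
Finally `F + m` itself splits: symmetry says `ℓ ∉ S ↔ F - ℓ ∈ S`, so for `w` least in some residue
class other than `0` and `F` (here `3 ≤ m` is needed), `w - m ∉ S` (in `ℤ`) gives `F + m - w ∈ S`.
-/

namespace AddSubmonoid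

def IsIndecomposable (S : AddSubmonoid ℕ) (x : ℕ) : Prop :=
  ∀ a ∈ S, ∀ b ∈ S, a + b = x → a = 0 ∨ b = 0

variable {S : AddSubmonoid ℕ} {F m : ℕ}

theorem mem_closure_diff_singleton_of_lt {G : Set ℕ} {a x : ℕ} (ha : a ∈ closure G)
    (hax : a < x) : a ∈ closure (G \ {x}) := by
  induction ha using closure_induction with
  | mem y hy => exact subset_closure ⟨hy, hax.ne⟩
  | zero => exact zero_mem _
  | add p q _ _ ihp ihq => exact add_mem (ihp (by omega)) (ihq (by omega))

theorem isIndecomposable_closure_of_notMem_closure_diff {G : Set ℕ} {x : ℕ}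
    (hx : x ∉ closure (G \ {x})) : (closure G).IsIndecomposable x := by
  rintro a ha b hb rfl
  by_contra! h
  exact hx <| add_mem (mem_closure_diff_singleton_of_lt ha (by omega))
    (mem_closure_diff_singleton_of_lt hb (by omega))

theorem IsIndecomposable.eq_of_modEq_of_le {x y : ℕ} (hy : S.IsIndecomposable y)
    (hm : m ∈ S) (hx : x ∈ S) (hx0 : x ≠ 0) (hxy : x ≡ y [MOD m]) (hle : x ≤ y) : x = y := by
  obtain ⟨k, hk⟩ := (Nat.modEq_iff_dvd' hle).mp hxy
  have hmk : m * k ∈ S := by simpa [mul_comm] using S.nsmul_mem hm k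
  rcases hy x hx (m * k) hmk (by omega) with h | h <;> omega

theorem IsIndecomposable.eq_of_modEq {x y : ℕ} (hx : S.IsIndecomposable x)
    (hy : S.IsIndecomposable y) (hm : m ∈ S) (hxS : x ∈ S) (hyS : y ∈ S) (hx0 : x ≠ 0)
    (hy0 : y ≠ 0) (hxy : x ≡ y [MOD m]) : x = y := by
  rcases le_total x y with hle | hle
  · exact hy.eq_of_modEq_of_le hm hxS hx0 hxy hle
  · exact (hx.eq_of_modEq_of_le hm hyS hy0 hxy.symm hle).symm

/-- `n ↦ F - n` maps `S ∩ [0, F]` injectively into the gaps, and both sets have `(F + 1) / 2`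
elements. -/
theorem frobenius_sub_mem_of_notMem (hF : F ∉ S) (hmax : ∀ ℓ, ℓ ∉ S → ℓ ≤ F)
    (hcard : F + 1 = 2 * ((S : Set ℕ)ᶜ).ncard) {ℓ : ℕ} (hℓ : ℓ ∉ S) : F - ℓ ∈ S := by
  classical
  set gaps := (Finset.range (F + 1)).filter (· ∉ S)
  set elts := (Finset.range (F + 1)).filter (· ∈ S)
  have hgaps : ((S : Set ℕ)ᶜ).ncard = gaps.card := by
    rw [← Set.ncard_coe_finset]
    congr 1
    ext n
    simpa [gaps] using fun hn => Nat.lt_succ_of_le (hmax n hn)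
  have helts : elts.card = gaps.card := by
    have : elts.card + gaps.card = F + 1 :=
      (Finset.card_filter_add_card_filter_not (· ∈ S)).trans (Finset.card_range _)
    omega
  have hsurj := Finset.surj_on_of_inj_on_of_card_le (s := elts) (t := gaps) (fun n _ => F - n)
    (fun n hn => by
      simp only [elts, gaps, Finset.mem_filter, Finset.mem_range] at hn ⊢
      refine ⟨by omega, fun h => hF ?_⟩
      simpa [Nat.add_sub_cancel' (Nat.le_of_lt_succ hn.1)] using add_mem hn.2 h)
    (fun a b ha hb hab => by
      simp only [elts, Finset.mem_filter, Finset.mem_range] at ha hb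
      omega)
    helts.ge
  obtain ⟨n, hn, rfl⟩ := hsurj ℓ (by simp [gaps, hmax ℓ hℓ, hℓ])
  simp only [elts, Finset.mem_filter, Finset.mem_range] at hn
  simpa [Nat.sub_sub_self (Nat.le_of_lt_succ hn.1)] using hn.2


theorem mem_of_lt_of_forall_notMem_le (hmax : ∀ ℓ, ℓ ∉ S → ℓ ≤ F) {n : ℕ} (hn : F < n) :
    n ∈ S := by
  by_contra h
  exact absurd (hmax n h) (by omega)

theorem exists_mem_modEq_forall_le (hmax : ∀ ℓ, ℓ ∉ S → ℓ ≤ F) (hm0 : m ≠ 0) (r : ℕ) :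
    ∃ w ∈ S, w ≡ r [MOD m] ∧ ∀ n ∈ S, n ≡ r [MOD m] → w ≤ n := by
  classical
  have hex : ∃ n, n ∈ S ∧ n ≡ r [MOD m] :=
    ⟨r + m * (F + 1), mem_of_lt_of_forall_notMem_le hmax (by nlinarith [Nat.pos_of_ne_zero hm0]),
      by simp [Nat.ModEq, Nat.add_mul_mod_self_left]⟩
  exact ⟨Nat.find hex, (Nat.find_spec hex).1, (Nat.find_spec hex).2,
    fun n hn hnr => Nat.find_min' hex ⟨hn, hnr⟩⟩

theorem exists_add_eq_frobenius_add (hmax : ∀ ℓ, ℓ ∉ S → ℓ ≤ F)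
    (hsymm : ∀ ℓ, ℓ ∉ S → F - ℓ ∈ S) (hm0 : m ≠ 0) {w : ℕ}
    (hmin : ∀ n ∈ S, n ≡ w [MOD m] → w ≤ n) : ∃ b ∈ S, w + b = F + m := by
  rcases lt_or_ge w m with hwm | hwm
  · exact ⟨F + m - w, mem_of_lt_of_forall_notMem_le hmax (by omega), by omega⟩
  · have hgap : w - m ∉ S := fun h => by
      have := hmin (w - m) h ((Nat.modEq_iff_dvd' (Nat.sub_le w m)).mpr ⟨1, by omega⟩)
      omega
    exact ⟨F - (w - m), hsymm _ hgap, by have := hmax _ hgap; omega⟩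

theorem not_isIndecomposable_frobenius_add (hmax : ∀ ℓ, ℓ ∉ S → ℓ ≤ F)
    (hsymm : ∀ ℓ, ℓ ∉ S → F - ℓ ∈ S) (hm3 : 3 ≤ m) : ¬ S.IsIndecomposable (F + m) := by
  intro hind
  obtain ⟨r, hr0, hrm, hrF⟩ : ∃ r, r ≠ 0 ∧ r < m ∧ r ≠ F % m :=
    if h : F % m = 1 then ⟨2, by omega, by omega, by omega⟩
    else ⟨1, by omega, by omega, h ∘ Eq.symm⟩
  obtain ⟨w, hwS, hwr, hmin⟩ := exists_mem_modEq_forall_le hmax (by omega : m ≠ 0) r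
  obtain ⟨b, hbS, hwb⟩ := exists_add_eq_frobenius_add hmax hsymm (m := m) (by omega)
    (fun n hn hnw => hmin n hn (hnw.trans hwr))
  rcases hind w hwS b hbS hwb with rfl | rfl
  · exact hr0 (by simpa [Nat.ModEq, Nat.mod_eq_of_lt hrm] using hwr.symm)
  · rw [add_zero] at hwb
    exact hrF (by simpa [hwb, Nat.ModEq, Nat.mod_eq_of_lt hrm] using hwr.symm)

theorem IsIndecomposable.not_modEq_frobenius (hF : F ∉ S) (hmax : ∀ ℓ, ℓ ∉ S → ℓ ≤ F)
    (hsymm : ∀ ℓ, ℓ ∉ S → F - ℓ ∈ S) (hm : m ∈ S) (hm3 : 3 ≤ m) {x : ℕ}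
    (hx : S.IsIndecomposable x) (hxS : x ∈ S) : ¬ x ≡ F [MOD m] := by
  intro hxF
  have hmul : ∀ k, m * k ∈ S := fun k => by simpa [mul_comm] using S.nsmul_mem hm k
  rcases lt_or_ge x F with hlt | hge
  · obtain ⟨k, hk⟩ := (Nat.modEq_iff_dvd' hlt.le).mp hxF
    exact hF (show F = x + m * k by omega ▸ add_mem hxS (hmul k))
  · obtain ⟨k, hk⟩ := (Nat.modEq_iff_dvd' hge).mp hxF.symm
    have hk0 : k ≠ 0 := by rintro rfl; exact hF (by simpa [show x = F by omega] using hxS)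
    have hmk : m ≤ m * k := Nat.le_mul_of_pos_right m (Nat.pos_of_ne_zero hk0)
    rcases eq_or_lt_of_le (show F ≤ x - m by omega) with hFx | hFx
    · rw [show x = F + m by omega] at hx
      exact not_isIndecomposable_frobenius_add hmax hsymm hm3 hx
    · have hxm : x - m ∈ S := mem_of_lt_of_forall_notMem_le hmax hFx
      rcases hx (x - m) hxm m hm (by omega) with h | h <;> omega

end AddSubmonoid

theorem symmetric_semigroup_card_minimal_generators_general
    (N : Set ℕ)
    (g : ℕ) (hg : g = (Nᶜ : Set ℕ).ncard)
    (hgap : (2 * g - 1) ∉ N)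
    (hmaxgap : ∀ ℓ : ℕ, ℓ ∉ N → ℓ ≤ 2 * g - 1)
    (m : ℕ) (hmN : m ∈ N)
    (hm3 : 3 ≤ m)
    (G : Finset ℕ)
    (hGgen : N = (AddSubmonoid.closure (G : Set ℕ) : Set ℕ))
    (hGmin : ∀ x ∈ G, x ∉ AddSubmonoid.closure ((G : Set ℕ) \ {x})) :
    G.card ≤ m - 1 := by
  subst hGgen
  set S := AddSubmonoid.closure (G : Set ℕ)
  have hsymm : ∀ ℓ, ℓ ∉ S → 2 * g - 1 - ℓ ∈ S :=
    fun ℓ => AddSubmonoid.frobenius_sub_mem_of_notMem hgap hmaxgap (by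
      have : 2 * g - 1 ≠ 0 := fun h => hgap (h ▸ S.zero_mem)
      omega)
  have hG : ∀ x ∈ G, x ∈ S ∧ x ≠ 0 ∧ S.IsIndecomposable x := fun x hx =>
    ⟨AddSubmonoid.subset_closure hx, fun h => hGmin x hx (h ▸ zero_mem _),
      AddSubmonoid.isIndecomposable_closure_of_notMem_closure_diff (hGmin x hx)⟩
  calc G.card ≤ ((Finset.range m).erase ((2 * g - 1) % m)).card := by
        refine Finset.card_le_card_of_injOn (· % m) (fun x hx => ?_) (fun x hx y hy hxy => ?_)
        · obtain ⟨hxS, -, hxi⟩ := hG x hx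
          simpa [Nat.mod_lt x (by omega : 0 < m), Nat.ModEq] using
            hxi.not_modEq_frobenius hgap hmaxgap hsymm hmN hm3 hxS
        · obtain ⟨hxS, hx0, hxi⟩ := hG x hx
          obtain ⟨hyS, hy0, hyi⟩ := hG y hy
          exact hxi.eq_of_modEq hyi hmN hxS hyS hx0 hy0 hxy
    _ = m - 1 := by
        rw [Finset.card_erase_of_mem (by simpa using Nat.mod_lt _ (by omega)), Finset.card_range]

/-- A symmetric numerical semigroup of multiplicity `m ≥ 3` can be generated by
at most `m − 1` elements: any minimal system of generators has at most `m − 1` elements. -/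
theorem symmetric_semigroup_card_minimal_generators
    (N : Set ℕ) (h0 : (0 : ℕ) ∈ N)
    (hadd : ∀ a ∈ N, ∀ b ∈ N, a + b ∈ N)
    (hfin : (Nᶜ : Set ℕ).Finite)
    (g : ℕ) (hg : g = (Nᶜ : Set ℕ).ncard)
    (hgap : (2 * g - 1) ∉ N)
    (hmaxgap : ∀ ℓ : ℕ, ℓ ∉ N → ℓ ≤ 2 * g - 1)
    (m : ℕ) (hmN : m ∈ N) (hm0 : m ≠ 0)
    (hmult : ∀ s ∈ N, s ≠ 0 → m ≤ s)
    (hm3 : 3 ≤ m)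
    (G : Finset ℕ)
    (hGgen : N = (AddSubmonoid.closure (G : Set ℕ) : Set ℕ))
    (hGmin : ∀ x ∈ G, x ∉ AddSubmonoid.closure ((G : Set ℕ) \ {x})) :
    G.card ≤ m - 1 :=
  symmetric_semigroup_card_minimal_generators_general N g hg hgap hmaxgap m hmN hm3 G hGgen hGmin
end

section
/- Let τ ≥ 1 be an integer and let N = ⟨6, 3+6τ, 4+6τ, 7+6τ, 8+6τ⟩ be the additive submonoid of ℕ generated by these five numbers. Then N admits the disjoint decomposition N = 6ℕ ⊔ (3+6τ+6ℕ) ⊔ (4+6τ+6ℕ) ⊔ (7+6τ+6ℕ) ⊔ (8+6τ+6ℕ) ⊔ (11+12τ+6ℕ), where a+6ℕ denotes {a+6k : k ∈ ℕ}. -/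
/-!
`6 ∈ N`, so `N` is the union of the progressions `w + 6ℕ` over its Apéry set
`{0, 3+6τ, 4+6τ, 7+6τ, 8+6τ, 11+12τ}` with respect to `6`; these six elements have distinct
residues mod 6, whence disjointness. They all lie in `N` (as `11+12τ = (3+6τ) + (8+6τ)`), and
conversely the union of the progressions contains the generators and is closed under addition,
because the sum of two Apéry elements lies above the Apéry element of its residue class.
-/

def progression (a m : ℕ) : Set ℕ := {x | ∃ k, x = a + m * k}

section progression

variable {a b m x : ℕ}

theorem mem_progression_iff : x ∈ progression a m ↔ a ≤ x ∧ a ≡ x [MOD m] := by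
  constructor
  · rintro ⟨k, rfl⟩
    exact ⟨Nat.le_add_right a _, (Nat.modEq_iff_dvd' (Nat.le_add_right a _)).2 (by simp)⟩
  · rintro ⟨hax, hmod⟩
    obtain ⟨k, hk⟩ := (Nat.modEq_iff_dvd' hax).1 hmod
    exact ⟨k, by omega⟩

theorem disjoint_progression (h : ¬ a ≡ b [MOD m]) :
    Disjoint (progression a m) (progression b m) :=
  Set.disjoint_left.2 fun _ ha hb =>
    h ((mem_progression_iff.1 ha).2.trans (mem_progression_iff.1 hb).2.symm)

theorem progression_subset_of_mem {M : AddSubmonoid ℕ} (ha : a ∈ M) (hm : m ∈ M) :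
    progression a m ⊆ M := by
  rintro _ ⟨k, rfl⟩
  rw [mul_comm, ← smul_eq_mul]
  exact M.add_mem ha (M.nsmul_mem hm k)

theorem add_mem_progression {c : ℕ} (hc : a + b ∈ progression c m) {x y : ℕ}
    (hx : x ∈ progression a m) (hy : y ∈ progression b m) : x + y ∈ progression c m := by
  obtain ⟨j, hj⟩ := hc
  obtain ⟨k, rfl⟩ := hx
  obtain ⟨l, rfl⟩ := hy
  exact ⟨j + k + l, by rw [show a + m * k + (b + m * l) = a + b + m * (k + l) by ring, hj]; ring⟩

theorem mem_iUnion_progression_iff {ι : Type*} (w : ι → ℕ) :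
    x ∈ ⋃ i, progression (w i) m ↔ ∃ i, w i ≤ x ∧ w i % m = x % m := by
  simp only [Set.mem_iUnion, mem_progression_iff, Nat.ModEq]

theorem closure_subset_iUnion_progression {ι : Type*} (w : ι → ℕ) (S : Set ℕ)
    (hS : S ⊆ ⋃ i, progression (w i) m) (h0 : 0 ∈ ⋃ i, progression (w i) m)
    (hw : ∀ i j, w i + w j ∈ ⋃ l, progression (w l) m) :
    (AddSubmonoid.closure S : Set ℕ) ⊆ ⋃ i, progression (w i) m := by
  intro x hx
  induction hx using AddSubmonoid.closure_induction with
  | mem y hy => exact hS hy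
  | zero => exact h0
  | add y z _ _ hy hz =>
    obtain ⟨i, hi⟩ := Set.mem_iUnion.1 hy
    obtain ⟨j, hj⟩ := Set.mem_iUnion.1 hz
    obtain ⟨l, hl⟩ := Set.mem_iUnion.1 (hw i j)
    exact Set.mem_iUnion.2 ⟨l, add_mem_progression hl hi hj⟩

end progression

/-- The Apéry set of `⟨6, 3+6τ, 4+6τ, 7+6τ, 8+6τ⟩` with respect to `6`. -/
def aperyElem (τ : ℕ) : Fin 6 → ℕ := ![0, 3 + 6 * τ, 4 + 6 * τ, 7 + 6 * τ, 8 + 6 * τ, 11 + 12 * τ]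

section apery

variable (τ : ℕ)

local notation "N" =>
  AddSubmonoid.closure ({6, 3 + 6 * τ, 4 + 6 * τ, 7 + 6 * τ, 8 + 6 * τ} : Set ℕ)

theorem aperyElem_mem_closure (i : Fin 6) : aperyElem τ i ∈ N := by
  have hgen : ∀ {x}, x ∈ ({6, 3 + 6 * τ, 4 + 6 * τ, 7 + 6 * τ, 8 + 6 * τ} : Set ℕ) → x ∈ N :=
    fun hx => AddSubmonoid.subset_closure hx
  fin_cases i
  · exact zero_mem _
  all_goals simp only [aperyElem, Fin.reduceFinMk, Matrix.cons_val]
  iterate 4 exact hgen (by simp)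
  · rw [show 11 + 12 * τ = (3 + 6 * τ) + (8 + 6 * τ) by ring]
    exact add_mem (hgen (by simp)) (hgen (by simp))

theorem aperyElem_not_modEq {i j : Fin 6} (hij : i ≠ j) :
    ¬ aperyElem τ i ≡ aperyElem τ j [MOD 6] := by
  fin_cases i <;> fin_cases j <;> simp [aperyElem, Nat.ModEq] at hij ⊢ <;> omega

theorem aperyElem_add_mem (i j : Fin 6) :
    aperyElem τ i + aperyElem τ j ∈ ⋃ l, progression (aperyElem τ l) 6 := by
  rw [mem_iUnion_progression_iff]
  fin_cases i <;> fin_cases j <;> simp [aperyElem, Fin.exists_fin_succ] <;> omega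

theorem closure_eq_iUnion_progression_aperyElem :
    (N : Set ℕ) = ⋃ i, progression (aperyElem τ i) 6 := by
  refine subset_antisymm (closure_subset_iUnion_progression _ _ ?_ ?_ (aperyElem_add_mem τ)) ?_
  · intro x hx
    rw [mem_iUnion_progression_iff]
    rcases hx with rfl | rfl | rfl | rfl | rfl <;> simp [aperyElem, Fin.exists_fin_succ]
  · exact Set.mem_iUnion.2 ⟨0, 0, rfl⟩
  · have h6 : 6 ∈ N := AddSubmonoid.subset_closure (by simp)
    exact Set.iUnion_subset fun i => progression_subset_of_mem (aperyElem_mem_closure τ i) h6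

end apery

theorem decomposition_family_one_general (τ : ℕ)
    (f : Fin 6 → Set ℕ)
    (hf : f = ![{x : ℕ | ∃ k : ℕ, x = 6 * k},
                {x : ℕ | ∃ k : ℕ, x = 3 + 6 * τ + 6 * k},
                {x : ℕ | ∃ k : ℕ, x = 4 + 6 * τ + 6 * k},
                {x : ℕ | ∃ k : ℕ, x = 7 + 6 * τ + 6 * k},
                {x : ℕ | ∃ k : ℕ, x = 8 + 6 * τ + 6 * k},
                {x : ℕ | ∃ k : ℕ, x = 11 + 12 * τ + 6 * k}]) :
    (AddSubmonoid.closure ({6, 3 + 6 * τ, 4 + 6 * τ, 7 + 6 * τ, 8 + 6 * τ} : Set ℕ) : Set ℕ)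
        = ⋃ i, f i ∧
      Pairwise (Function.onFun Disjoint f) := by
  have hf' : f = fun i => progression (aperyElem τ i) 6 := by
    subst hf
    funext i
    fin_cases i <;> simp [progression, aperyElem]
  subst hf'
  exact ⟨closure_eq_iUnion_progression_aperyElem τ,
    fun i j hij => disjoint_progression (aperyElem_not_modEq τ hij)⟩

/-- For `τ ≥ 1`, the submonoid `N = ⟨6, 3+6τ, 4+6τ, 7+6τ, 8+6τ⟩ ⊆ ℕ` admits
the disjoint decomposition
`N = 6ℕ ⊔ (3+6τ+6ℕ) ⊔ (4+6τ+6ℕ) ⊔ (7+6τ+6ℕ) ⊔ (8+6τ+6ℕ) ⊔ (11+12τ+6ℕ)`. -/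
theorem decomposition_family_one (τ : ℕ) (hτ : 1 ≤ τ)
    (f : Fin 6 → Set ℕ)
    (hf : f = ![{x : ℕ | ∃ k : ℕ, x = 6 * k},
                {x : ℕ | ∃ k : ℕ, x = 3 + 6 * τ + 6 * k},
                {x : ℕ | ∃ k : ℕ, x = 4 + 6 * τ + 6 * k},
                {x : ℕ | ∃ k : ℕ, x = 7 + 6 * τ + 6 * k},
                {x : ℕ | ∃ k : ℕ, x = 8 + 6 * τ + 6 * k},
                {x : ℕ | ∃ k : ℕ, x = 11 + 12 * τ + 6 * k}]) :
    (AddSubmonoid.closure ({6, 3 + 6 * τ, 4 + 6 * τ, 7 + 6 * τ, 8 + 6 * τ} : Set ℕ) : Set ℕ)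
        = ⋃ i, f i ∧
      Pairwise (Function.onFun Disjoint f) :=
  decomposition_family_one_general τ f hf
end

section
/- Let τ ≥ 1 be an integer and let N = ⟨6, 3+6τ, 4+6τ, 7+6τ, 8+6τ⟩. Then N is a numerical semigroup of genus g = 3+6τ whose largest gap is 12τ+5 = 2g−1; in particular N is symmetric. Moreover {6, 3+6τ, 4+6τ, 7+6τ, 8+6τ} is a minimal system of generators of N, i.e. no proper subset of it generates N. -/
namespace Fam1

def gens (τ : ℕ) : Set ℕ := {6, 3 + 6 * τ, 4 + 6 * τ, 7 + 6 * τ, 8 + 6 * τ}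

def P (τ n : ℕ) : Prop :=
  n % 6 = 0 ∨ (n % 6 = 3 ∧ 3 + 6*τ ≤ n) ∨ (n % 6 = 4 ∧ 4 + 6*τ ≤ n)
    ∨ (n % 6 = 1 ∧ 7 + 6*τ ≤ n) ∨ (n % 6 = 2 ∧ 8 + 6*τ ≤ n) ∨ (n % 6 = 5 ∧ 11 + 12*τ ≤ n)

def S (τ : ℕ) : AddSubmonoid ℕ where
  carrier := {n | P τ n}
  zero_mem' := by simp [P]
  add_mem' := by
    intro a b ha hb
    simp only [Set.mem_setOf_eq, P] at *
    omega

lemma mem_S {τ n : ℕ} : n ∈ S τ ↔ P τ n := Iff.rfl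

lemma six_mul_mem (τ k : ℕ) : 6 * k ∈ AddSubmonoid.closure (gens τ) := by
  have h6 : (6:ℕ) ∈ AddSubmonoid.closure (gens τ) := AddSubmonoid.subset_closure (by simp [gens])
  have := nsmul_mem h6 k
  simpa [smul_eq_mul, Nat.mul_comm] using this

lemma closure_eq (τ : ℕ) : AddSubmonoid.closure (gens τ) = S τ := by
  apply le_antisymm
  · rw [AddSubmonoid.closure_le]
    intro x hx
    have hP : P τ x := by
      simp only [gens, Set.mem_insert_iff, Set.mem_singleton_iff] at hx
      simp only [P]
      rcases hx with rfl | rfl | rfl | rfl | rfl <;> omega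
    exact hP
  · intro n hn
    rw [mem_S, P] at hn
    have h3 : (3 + 6*τ : ℕ) ∈ AddSubmonoid.closure (gens τ) := AddSubmonoid.subset_closure (by simp [gens])
    have h4 : (4 + 6*τ : ℕ) ∈ AddSubmonoid.closure (gens τ) := AddSubmonoid.subset_closure (by simp [gens])
    have h7 : (7 + 6*τ : ℕ) ∈ AddSubmonoid.closure (gens τ) := AddSubmonoid.subset_closure (by simp [gens])
    have h8 : (8 + 6*τ : ℕ) ∈ AddSubmonoid.closure (gens τ) := AddSubmonoid.subset_closure (by simp [gens])
    rcases hn with h | ⟨h, hle⟩ | ⟨h, hle⟩ | ⟨h, hle⟩ | ⟨h, hle⟩ | ⟨h, hle⟩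
    · obtain ⟨k, rfl⟩ : ∃ k, n = 6 * k := ⟨n / 6, by omega⟩
      exact six_mul_mem τ k
    · obtain ⟨k, rfl⟩ : ∃ k, n = (3 + 6*τ) + 6 * k := ⟨(n - (3+6*τ))/6, by omega⟩
      exact add_mem h3 (six_mul_mem τ k)
    · obtain ⟨k, rfl⟩ : ∃ k, n = (4 + 6*τ) + 6 * k := ⟨(n - (4+6*τ))/6, by omega⟩
      exact add_mem h4 (six_mul_mem τ k)
    · obtain ⟨k, rfl⟩ : ∃ k, n = (7 + 6*τ) + 6 * k := ⟨(n - (7+6*τ))/6, by omega⟩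
      exact add_mem h7 (six_mul_mem τ k)
    · obtain ⟨k, rfl⟩ : ∃ k, n = (8 + 6*τ) + 6 * k := ⟨(n - (8+6*τ))/6, by omega⟩
      exact add_mem h8 (six_mul_mem τ k)
    · obtain ⟨k, rfl⟩ : ∃ k, n = (3 + 6*τ) + ((8 + 6*τ) + 6 * k) :=
        ⟨(n - (11+12*τ))/6, by omega⟩
      exact add_mem h3 (add_mem h8 (six_mul_mem τ k))

lemma mem_closure_iff (τ n : ℕ) : n ∈ AddSubmonoid.closure (gens τ) ↔ P τ n := by
  rw [closure_eq]; exact Iff.rfl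

/- the gap finset -/
def G (τ : ℕ) : Finset ℕ :=
  ((Finset.range (τ+1)).image fun k => 6*k+1) ∪
  ((Finset.range (τ+1)).image fun k => 6*k+2) ∪
  ((Finset.range τ).image fun k => 6*k+3) ∪
  ((Finset.range τ).image fun k => 6*k+4) ∪
  ((Finset.range (2*τ+1)).image fun k => 6*k+5)

lemma mem_G (τ n : ℕ) : n ∈ G τ ↔ ¬ P τ n := by
  simp only [G, Finset.mem_union, Finset.mem_image, Finset.mem_range, P]
  constructor
  · rintro ((((⟨k,hk,rfl⟩|⟨k,hk,rfl⟩)|⟨k,hk,rfl⟩)|⟨k,hk,rfl⟩)|⟨k,hk,rfl⟩) <;> omega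
  · intro h
    by_cases h1 : n % 6 = 1
    · exact Or.inl (Or.inl (Or.inl (Or.inl ⟨n/6, by omega, by omega⟩)))
    by_cases h2 : n % 6 = 2
    · exact Or.inl (Or.inl (Or.inl (Or.inr ⟨n/6, by omega, by omega⟩)))
    by_cases h3 : n % 6 = 3
    · exact Or.inl (Or.inl (Or.inr ⟨n/6, by omega, by omega⟩))
    by_cases h4 : n % 6 = 4
    · exact Or.inl (Or.inr ⟨n/6, by omega, by omega⟩)
    · exact Or.inr ⟨n/6, by omega, by omega⟩

lemma disj_images (c d m m' : ℕ) (h : ¬ (c % 6 = d % 6)) :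
    Disjoint ((Finset.range m).image fun k => 6*k+c)
      ((Finset.range m').image fun k => 6*k+d) := by
  rw [Finset.disjoint_left]
  intro a ha hb
  simp only [Finset.mem_image, Finset.mem_range] at ha hb
  obtain ⟨k, _, hk⟩ := ha
  obtain ⟨l, _, hl⟩ := hb
  have hk' : 6*k+c = a := hk
  have hl' : 6*l+d = a := hl
  omega

lemma card_G (τ : ℕ) : (G τ).card = 3 + 6 * τ := by
  have inj : ∀ c : ℕ, Function.Injective (fun k => 6*k+c) := fun c a b h => by
    have h' : 6*a+c = 6*b+c := h
    omega
  rw [G, Finset.card_union_of_disjoint, Finset.card_union_of_disjoint,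
    Finset.card_union_of_disjoint, Finset.card_union_of_disjoint]
  · simp only [Finset.card_image_of_injective _ (inj _), Finset.card_range]
    omega
  · exact disj_images 1 2 _ _ (by omega)
  · simp only [Finset.disjoint_union_left]
    exact ⟨disj_images 1 3 _ _ (by omega), disj_images 2 3 _ _ (by omega)⟩
  · simp only [Finset.disjoint_union_left]
    exact ⟨⟨disj_images 1 4 _ _ (by omega), disj_images 2 4 _ _ (by omega)⟩,
      disj_images 3 4 _ _ (by omega)⟩
  · simp only [Finset.disjoint_union_left]
    exact ⟨⟨⟨disj_images 1 5 _ _ (by omega), disj_images 2 5 _ _ (by omega)⟩,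
      disj_images 3 5 _ _ (by omega)⟩, disj_images 4 5 _ _ (by omega)⟩

lemma compl_eq (τ : ℕ) : ((AddSubmonoid.closure (gens τ) : Set ℕ))ᶜ = ↑(G τ) := by
  ext n
  simp only [Set.mem_compl_iff, SetLike.mem_coe, mem_closure_iff, Finset.coe_sort_coe,
    Finset.mem_coe, mem_G]

/- submonoids for minimality -/
def Q1 (τ : ℕ) : AddSubmonoid ℕ where
  carrier := {n | n = 0 ∨ 3 + 6*τ ≤ n}
  zero_mem' := by simp
  add_mem' := by intro a b ha hb; simp only [Set.mem_setOf_eq] at *; omega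

def Q2 (τ : ℕ) : AddSubmonoid ℕ where
  carrier := {n | n % 6 = 0 ∨ (n % 6 = 4 ∧ 4 + 6*τ ≤ n) ∨ (n % 6 = 1 ∧ 7 + 6*τ ≤ n)
    ∨ (n % 6 = 2 ∧ 8 + 6*τ ≤ n) ∨ (n % 6 = 5 ∧ 11 + 12*τ ≤ n) ∨ (n % 6 = 3 ∧ 15 + 12*τ ≤ n)}
  zero_mem' := by simp
  add_mem' := by intro a b ha hb; simp only [Set.mem_setOf_eq] at *; omega

def Q3 (τ : ℕ) : AddSubmonoid ℕ where
  carrier := {n | n % 6 = 0 ∨ (n % 6 = 3 ∧ 3 + 6*τ ≤ n) ∨ (n % 6 = 1 ∧ 7 + 6*τ ≤ n)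
    ∨ (n % 6 = 2 ∧ 8 + 6*τ ≤ n) ∨ (n % 6 = 4 ∧ 10 + 12*τ ≤ n) ∨ (n % 6 = 5 ∧ 11 + 12*τ ≤ n)}
  zero_mem' := by simp
  add_mem' := by intro a b ha hb; simp only [Set.mem_setOf_eq] at *; omega

def Q4 (τ : ℕ) : AddSubmonoid ℕ where
  carrier := {n | n % 6 = 0 ∨ (n % 6 = 3 ∧ 3 + 6*τ ≤ n) ∨ (n % 6 = 4 ∧ 4 + 6*τ ≤ n)
    ∨ (n % 6 = 2 ∧ 8 + 6*τ ≤ n) ∨ (n % 6 = 1 ∧ 7 + 12*τ ≤ n) ∨ (n % 6 = 5 ∧ 11 + 12*τ ≤ n)}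
  zero_mem' := by simp
  add_mem' := by intro a b ha hb; simp only [Set.mem_setOf_eq] at *; omega

def Q5 (τ : ℕ) : AddSubmonoid ℕ where
  carrier := {n | n % 6 = 0 ∨ (n % 6 = 3 ∧ 3 + 6*τ ≤ n) ∨ (n % 6 = 4 ∧ 4 + 6*τ ≤ n)
    ∨ (n % 6 = 1 ∧ 7 + 6*τ ≤ n) ∨ (n % 6 = 2 ∧ 8 + 12*τ ≤ n) ∨ (n % 6 = 5 ∧ 11 + 12*τ ≤ n)}
  zero_mem' := by simp
  add_mem' := by intro a b ha hb; simp only [Set.mem_setOf_eq] at *; omega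

end Fam1

open Fam1

/-- For `τ ≥ 1`, `N = ⟨6, 3+6τ, 4+6τ, 7+6τ, 8+6τ⟩` is a numerical semigroup of
genus `g = 3+6τ` whose largest gap is `12τ+5 = 2g−1` (so `N` is symmetric), and
`{6, 3+6τ, 4+6τ, 7+6τ, 8+6τ}` is a minimal system of generators. -/
theorem family_one_symmetric_minimal (τ : ℕ) (hτ : 1 ≤ τ) :
    ((AddSubmonoid.closure ({6, 3 + 6 * τ, 4 + 6 * τ, 7 + 6 * τ, 8 + 6 * τ} : Set ℕ)
        : Set ℕ))ᶜ.Finite ∧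
    ((AddSubmonoid.closure ({6, 3 + 6 * τ, 4 + 6 * τ, 7 + 6 * τ, 8 + 6 * τ} : Set ℕ)
        : Set ℕ))ᶜ.ncard = 3 + 6 * τ ∧
    (12 * τ + 5) ∉
      AddSubmonoid.closure ({6, 3 + 6 * τ, 4 + 6 * τ, 7 + 6 * τ, 8 + 6 * τ} : Set ℕ) ∧
    12 * τ + 5 = 2 * (3 + 6 * τ) - 1 ∧
    (∀ ℓ : ℕ, ℓ ∉
        AddSubmonoid.closure ({6, 3 + 6 * τ, 4 + 6 * τ, 7 + 6 * τ, 8 + 6 * τ} : Set ℕ) →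
      ℓ ≤ 12 * τ + 5) ∧
    (∀ x ∈ ({6, 3 + 6 * τ, 4 + 6 * τ, 7 + 6 * τ, 8 + 6 * τ} : Set ℕ),
      x ∉ AddSubmonoid.closure
        (({6, 3 + 6 * τ, 4 + 6 * τ, 7 + 6 * τ, 8 + 6 * τ} : Set ℕ) \ {x})) := by
  have hset : ({6, 3 + 6 * τ, 4 + 6 * τ, 7 + 6 * τ, 8 + 6 * τ} : Set ℕ) = gens τ := rfl
  rw [hset, compl_eq τ]
  refine ⟨Finset.finite_toSet _, ?_, ?_, by omega, ?_, ?_⟩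
  · rw [Set.ncard_coe_finset]; exact card_G τ
  · rw [mem_closure_iff, P]; omega
  · intro ℓ hℓ
    rw [mem_closure_iff, P] at hℓ
    omega
  · intro x hx
    simp only [gens, Set.mem_insert_iff, Set.mem_singleton_iff] at hx
    rcases hx with rfl | rfl | rfl | rfl | rfl
    · intro hmem
      have hsub : gens τ \ {(6:ℕ)} ⊆ (Q1 τ : Set ℕ) := by
        intro y hy
        obtain ⟨hy1, hy2⟩ := hy
        simp only [gens, Set.mem_insert_iff, Set.mem_singleton_iff] at hy1
        simp only [Set.mem_singleton_iff] at hy2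
        show y = 0 ∨ 3 + 6*τ ≤ y
        rcases hy1 with rfl | rfl | rfl | rfl | rfl <;> omega
      have := (AddSubmonoid.closure_le.mpr hsub) hmem
      have h6 : (6:ℕ) = 0 ∨ 3 + 6*τ ≤ 6 := this
      omega
    · intro hmem
      have hsub : gens τ \ {(3 + 6*τ:ℕ)} ⊆ (Q2 τ : Set ℕ) := by
        intro y hy
        obtain ⟨hy1, hy2⟩ := hy
        simp only [gens, Set.mem_insert_iff, Set.mem_singleton_iff] at hy1
        simp only [Set.mem_singleton_iff] at hy2
        show y % 6 = 0 ∨ (y % 6 = 4 ∧ 4 + 6*τ ≤ y) ∨ (y % 6 = 1 ∧ 7 + 6*τ ≤ y)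
          ∨ (y % 6 = 2 ∧ 8 + 6*τ ≤ y) ∨ (y % 6 = 5 ∧ 11 + 12*τ ≤ y) ∨ (y % 6 = 3 ∧ 15 + 12*τ ≤ y)
        rcases hy1 with rfl | rfl | rfl | rfl | rfl <;> omega
      have h6 := (AddSubmonoid.closure_le.mpr hsub) hmem
      have : (3+6*τ) % 6 = 0 ∨ ((3+6*τ) % 6 = 4 ∧ 4 + 6*τ ≤ 3+6*τ) ∨ ((3+6*τ) % 6 = 1 ∧ 7 + 6*τ ≤ 3+6*τ)
          ∨ ((3+6*τ) % 6 = 2 ∧ 8 + 6*τ ≤ 3+6*τ) ∨ ((3+6*τ) % 6 = 5 ∧ 11 + 12*τ ≤ 3+6*τ)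
          ∨ ((3+6*τ) % 6 = 3 ∧ 15 + 12*τ ≤ 3+6*τ) := h6
      omega
    · intro hmem
      have hsub : gens τ \ {(4 + 6*τ:ℕ)} ⊆ (Q3 τ : Set ℕ) := by
        intro y hy
        obtain ⟨hy1, hy2⟩ := hy
        simp only [gens, Set.mem_insert_iff, Set.mem_singleton_iff] at hy1
        simp only [Set.mem_singleton_iff] at hy2
        show y % 6 = 0 ∨ (y % 6 = 3 ∧ 3 + 6*τ ≤ y) ∨ (y % 6 = 1 ∧ 7 + 6*τ ≤ y)
          ∨ (y % 6 = 2 ∧ 8 + 6*τ ≤ y) ∨ (y % 6 = 4 ∧ 10 + 12*τ ≤ y) ∨ (y % 6 = 5 ∧ 11 + 12*τ ≤ y)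
        rcases hy1 with rfl | rfl | rfl | rfl | rfl <;> omega
      have h6 := (AddSubmonoid.closure_le.mpr hsub) hmem
      have : (4+6*τ) % 6 = 0 ∨ ((4+6*τ) % 6 = 3 ∧ 3 + 6*τ ≤ 4+6*τ) ∨ ((4+6*τ) % 6 = 1 ∧ 7 + 6*τ ≤ 4+6*τ)
          ∨ ((4+6*τ) % 6 = 2 ∧ 8 + 6*τ ≤ 4+6*τ) ∨ ((4+6*τ) % 6 = 4 ∧ 10 + 12*τ ≤ 4+6*τ)
          ∨ ((4+6*τ) % 6 = 5 ∧ 11 + 12*τ ≤ 4+6*τ) := h6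
      omega
    · intro hmem
      have hsub : gens τ \ {(7 + 6*τ:ℕ)} ⊆ (Q4 τ : Set ℕ) := by
        intro y hy
        obtain ⟨hy1, hy2⟩ := hy
        simp only [gens, Set.mem_insert_iff, Set.mem_singleton_iff] at hy1
        simp only [Set.mem_singleton_iff] at hy2
        show y % 6 = 0 ∨ (y % 6 = 3 ∧ 3 + 6*τ ≤ y) ∨ (y % 6 = 4 ∧ 4 + 6*τ ≤ y)
          ∨ (y % 6 = 2 ∧ 8 + 6*τ ≤ y) ∨ (y % 6 = 1 ∧ 7 + 12*τ ≤ y) ∨ (y % 6 = 5 ∧ 11 + 12*τ ≤ y)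
        rcases hy1 with rfl | rfl | rfl | rfl | rfl <;> omega
      have h6 := (AddSubmonoid.closure_le.mpr hsub) hmem
      have : (7+6*τ) % 6 = 0 ∨ ((7+6*τ) % 6 = 3 ∧ 3 + 6*τ ≤ 7+6*τ) ∨ ((7+6*τ) % 6 = 4 ∧ 4 + 6*τ ≤ 7+6*τ)
          ∨ ((7+6*τ) % 6 = 2 ∧ 8 + 6*τ ≤ 7+6*τ) ∨ ((7+6*τ) % 6 = 1 ∧ 7 + 12*τ ≤ 7+6*τ)
          ∨ ((7+6*τ) % 6 = 5 ∧ 11 + 12*τ ≤ 7+6*τ) := h6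
      omega
    · intro hmem
      have hsub : gens τ \ {(8 + 6*τ:ℕ)} ⊆ (Q5 τ : Set ℕ) := by
        intro y hy
        obtain ⟨hy1, hy2⟩ := hy
        simp only [gens, Set.mem_insert_iff, Set.mem_singleton_iff] at hy1
        simp only [Set.mem_singleton_iff] at hy2
        show y % 6 = 0 ∨ (y % 6 = 3 ∧ 3 + 6*τ ≤ y) ∨ (y % 6 = 4 ∧ 4 + 6*τ ≤ y)
          ∨ (y % 6 = 1 ∧ 7 + 6*τ ≤ y) ∨ (y % 6 = 2 ∧ 8 + 12*τ ≤ y) ∨ (y % 6 = 5 ∧ 11 + 12*τ ≤ y)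
        rcases hy1 with rfl | rfl | rfl | rfl | rfl <;> omega
      have h6 := (AddSubmonoid.closure_le.mpr hsub) hmem
      have : (8+6*τ) % 6 = 0 ∨ ((8+6*τ) % 6 = 3 ∧ 3 + 6*τ ≤ 8+6*τ) ∨ ((8+6*τ) % 6 = 4 ∧ 4 + 6*τ ≤ 8+6*τ)
          ∨ ((8+6*τ) % 6 = 1 ∧ 7 + 6*τ ≤ 8+6*τ) ∨ ((8+6*τ) % 6 = 2 ∧ 8 + 12*τ ≤ 8+6*τ)
          ∨ ((8+6*τ) % 6 = 5 ∧ 11 + 12*τ ≤ 8+6*τ) := h6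
      omega
end

section
/- Let k be an algebraically closed field of characteristic zero and τ ≥ 1 an integer. Let φ : k[X, Y₃, Y₄, Y₇, Y₈] → k[t] be the k-algebra homomorphism with φ(X) = t^6 and φ(Y_j) = t^{j+6τ} for j = 3, 4, 7, 8. Then the kernel of φ is the ideal generated by the nine binomials: Y₃² − X^{2τ+1}, Y₃Y₄ − X^τ Y₇, Y₄² − X^τ Y₈, Y₃Y₇ − X^{τ+1} Y₄, Y₄Y₇ − Y₃Y₈, Y₄Y₈ − X^{2τ+2}, Y₇² − X^{τ+1} Y₈, Y₇Y₈ − X^{τ+2} Y₃, Y₈² − X^{τ+2} Y₄. -/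
set_option maxHeartbeats 1000000


/-- The `k`-algebra homomorphism `k[X, Y₃, Y₄, Y₇, Y₈] → k[t]` with `X ↦ t^6` and
`Y_j ↦ t^{j+6τ}` for `j = 3, 4, 7, 8` (variables indexed `0,…,4` in this order). -/
noncomputable def monCurveMapOne (k : Type*) [CommRing k] (τ : ℕ) :
    MvPolynomial (Fin 5) k →ₐ[k] Polynomial k :=
  MvPolynomial.aeval fun i : Fin 5 =>
    (Polynomial.X : Polynomial k) ^ (![6, 3 + 6 * τ, 4 + 6 * τ, 7 + 6 * τ, 8 + 6 * τ] i)

/-- The nine binomials `Y₃² − X^{2τ+1}, Y₃Y₄ − X^τY₇, Y₄² − X^τY₈, Y₃Y₇ − X^{τ+1}Y₄,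
Y₄Y₇ − Y₃Y₈, Y₄Y₈ − X^{2τ+2}, Y₇² − X^{τ+1}Y₈, Y₇Y₈ − X^{τ+2}Y₃, Y₈² − X^{τ+2}Y₄`. -/
noncomputable def monCurveGensOne (k : Type*) [CommRing k] (τ : ℕ) :
    Set (MvPolynomial (Fin 5) k) :=
  let X : MvPolynomial (Fin 5) k := MvPolynomial.X 0
  let Y3 : MvPolynomial (Fin 5) k := MvPolynomial.X 1
  let Y4 : MvPolynomial (Fin 5) k := MvPolynomial.X 2
  let Y7 : MvPolynomial (Fin 5) k := MvPolynomial.X 3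
  let Y8 : MvPolynomial (Fin 5) k := MvPolynomial.X 4
  {Y3 ^ 2 - X ^ (2 * τ + 1), Y3 * Y4 - X ^ τ * Y7, Y4 ^ 2 - X ^ τ * Y8,
   Y3 * Y7 - X ^ (τ + 1) * Y4, Y4 * Y7 - Y3 * Y8, Y4 * Y8 - X ^ (2 * τ + 2),
   Y7 ^ 2 - X ^ (τ + 1) * Y8, Y7 * Y8 - X ^ (τ + 2) * Y3, Y8 ^ 2 - X ^ (τ + 2) * Y4}


open MvPolynomial

noncomputable def NfOne (k : Type*) [CommRing k] (τ n : ℕ) : MvPolynomial (Fin 5) k :=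
  if n % 6 = 0 then X 0 ^ (n / 6)
  else if n % 6 = 1 then X 0 ^ ((n - (7 + 6*τ)) / 6) * X 3
  else if n % 6 = 2 then X 0 ^ ((n - (8 + 6*τ)) / 6) * X 4
  else if n % 6 = 3 then X 0 ^ ((n - (3 + 6*τ)) / 6) * X 1
  else if n % 6 = 4 then X 0 ^ ((n - (4 + 6*τ)) / 6) * X 2
  else X 0 ^ ((n - (11 + 12*τ)) / 6) * X 1 * X 4

def EOne (τ a b c d e : ℕ) : ℕ :=
  6*a + b*(3+6*τ) + c*(4+6*τ) + d*(7+6*τ) + e*(8+6*τ)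

noncomputable def PsiOne (k : Type*) [CommRing k] (τ : ℕ) :
    Polynomial k →+ MvPolynomial (Fin 5) k where
  toFun g := g.sum fun n cc => cc • NfOne k τ n
  map_zero' := Polynomial.sum_zero_index _
  map_add' f g := Polynomial.sum_add_index f g (fun n cc => cc • NfOne k τ n)
    (fun n => zero_smul k _) (fun n b1 b2 => add_smul b1 b2 _)

section
variable {k : Type*} [CommRing k] (τ : ℕ)

lemma NfOne_eq0 (n a : ℕ) (h1 : n % 6 = 0) (h2 : n / 6 = a) :
    NfOne k τ n = X 0 ^ a := by simp [NfOne, h1, h2]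
lemma NfOne_eq1 (n a : ℕ) (h1 : n % 6 = 1) (h2 : (n - (7+6*τ)) / 6 = a) :
    NfOne k τ n = X 0 ^ a * X 3 := by simp [NfOne, h1, h2]
lemma NfOne_eq2 (n a : ℕ) (h1 : n % 6 = 2) (h2 : (n - (8+6*τ)) / 6 = a) :
    NfOne k τ n = X 0 ^ a * X 4 := by simp [NfOne, h1, h2]
lemma NfOne_eq3 (n a : ℕ) (h1 : n % 6 = 3) (h2 : (n - (3+6*τ)) / 6 = a) :
    NfOne k τ n = X 0 ^ a * X 1 := by simp [NfOne, h1, h2]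
lemma NfOne_eq4 (n a : ℕ) (h1 : n % 6 = 4) (h2 : (n - (4+6*τ)) / 6 = a) :
    NfOne k τ n = X 0 ^ a * X 2 := by simp [NfOne, h1, h2]
lemma NfOne_eq5 (n a : ℕ) (h1 : n % 6 = 5) (h2 : (n - (11+12*τ)) / 6 = a) :
    NfOne k τ n = X 0 ^ a * X 1 * X 4 := by simp [NfOne, h1, h2]

lemma redOne : ∀ (m a b c d e : ℕ), 3*(b+c+d+e)+c+d ≤ m →
    X 0 ^ a * X 1 ^ b * X 2 ^ c * X 3 ^ d * X 4 ^ e - NfOne k τ (EOne τ a b c d e)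
      ∈ Ideal.span (monCurveGensOne k τ) := by
  set I := Ideal.span (monCurveGensOne k τ) with hI
  have htr : ∀ A B C : MvPolynomial (Fin 5) k, A - B ∈ I → B - C ∈ I → A - C ∈ I := by
    intro A B C h1 h2
    have := I.add_mem h1 h2
    simpa using this
  intro m
  induction m using Nat.strong_induction_on with
  | _ m ih =>
  intro a b c d e hm
  by_cases hb2 : 2 ≤ b
  · obtain ⟨b, rfl⟩ : ∃ b', b = b' + 2 := ⟨b - 2, by omega⟩
    refine htr _ (X 0 ^ (a+(2*τ+1)) * X 1 ^ b * X 2 ^ c * X 3 ^ d * X 4 ^ e) _ ?_ ?_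
    · have : X 0 ^ a * X 1 ^ (b+2) * X 2 ^ c * X 3 ^ d * X 4 ^ e -
          X 0 ^ (a+(2*τ+1)) * X 1 ^ b * X 2 ^ c * X 3 ^ d * X 4 ^ e
          = (X 0 ^ a * X 1 ^ b * X 2 ^ c * X 3 ^ d * X 4 ^ e) *
            ((X 1 : MvPolynomial (Fin 5) k) ^ 2 - X 0 ^ (2*τ+1)) := by ring
      rw [this]
      exact Ideal.mul_mem_left _ _ (Ideal.subset_span (by simp [monCurveGensOne]))
    · rw [show EOne τ a (b+2) c d e = EOne τ (a+(2*τ+1)) b c d e by simp only [EOne]; ring]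
      exact ih (3*(b+c+d+e)+c+d) (by omega) _ _ _ _ _ le_rfl
  by_cases hbc : 1 ≤ b ∧ 1 ≤ c
  · obtain ⟨⟨b, rfl⟩, ⟨c, rfl⟩⟩ : (∃ b', b = b' + 1) ∧ (∃ c', c = c' + 1) :=
      ⟨⟨b - 1, by omega⟩, ⟨c - 1, by omega⟩⟩
    refine htr _ (X 0 ^ (a+τ) * X 1 ^ b * X 2 ^ c * X 3 ^ (d+1) * X 4 ^ e) _ ?_ ?_
    · have : X 0 ^ a * X 1 ^ (b+1) * X 2 ^ (c+1) * X 3 ^ d * X 4 ^ e -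
          X 0 ^ (a+τ) * X 1 ^ b * X 2 ^ c * X 3 ^ (d+1) * X 4 ^ e
          = (X 0 ^ a * X 1 ^ b * X 2 ^ c * X 3 ^ d * X 4 ^ e) *
            ((X 1 : MvPolynomial (Fin 5) k) * X 2 - X 0 ^ τ * X 3) := by ring
      rw [this]
      exact Ideal.mul_mem_left _ _ (Ideal.subset_span (by simp [monCurveGensOne]))
    · rw [show EOne τ a (b+1) (c+1) d e = EOne τ (a+τ) b c (d+1) e by simp only [EOne]; ring]
      exact ih (3*(b+c+(d+1)+e)+c+(d+1)) (by omega) _ _ _ _ _ le_rfl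
  by_cases hc2 : 2 ≤ c
  · obtain ⟨c, rfl⟩ : ∃ c', c = c' + 2 := ⟨c - 2, by omega⟩
    refine htr _ (X 0 ^ (a+τ) * X 1 ^ b * X 2 ^ c * X 3 ^ d * X 4 ^ (e+1)) _ ?_ ?_
    · have : X 0 ^ a * X 1 ^ b * X 2 ^ (c+2) * X 3 ^ d * X 4 ^ e -
          X 0 ^ (a+τ) * X 1 ^ b * X 2 ^ c * X 3 ^ d * X 4 ^ (e+1)
          = (X 0 ^ a * X 1 ^ b * X 2 ^ c * X 3 ^ d * X 4 ^ e) *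
            ((X 2 : MvPolynomial (Fin 5) k) ^ 2 - X 0 ^ τ * X 4) := by ring
      rw [this]
      exact Ideal.mul_mem_left _ _ (Ideal.subset_span (by simp [monCurveGensOne]))
    · rw [show EOne τ a b (c+2) d e = EOne τ (a+τ) b c d (e+1) by simp only [EOne]; ring]
      exact ih (3*(b+c+d+(e+1))+c+d) (by omega) _ _ _ _ _ le_rfl
  by_cases hbd : 1 ≤ b ∧ 1 ≤ d
  · obtain ⟨⟨b, rfl⟩, ⟨d, rfl⟩⟩ : (∃ b', b = b' + 1) ∧ (∃ d', d = d' + 1) :=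
      ⟨⟨b - 1, by omega⟩, ⟨d - 1, by omega⟩⟩
    refine htr _ (X 0 ^ (a+(τ+1)) * X 1 ^ b * X 2 ^ (c+1) * X 3 ^ d * X 4 ^ e) _ ?_ ?_
    · have : X 0 ^ a * X 1 ^ (b+1) * X 2 ^ c * X 3 ^ (d+1) * X 4 ^ e -
          X 0 ^ (a+(τ+1)) * X 1 ^ b * X 2 ^ (c+1) * X 3 ^ d * X 4 ^ e
          = (X 0 ^ a * X 1 ^ b * X 2 ^ c * X 3 ^ d * X 4 ^ e) *
            ((X 1 : MvPolynomial (Fin 5) k) * X 3 - X 0 ^ (τ+1) * X 2) := by ring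
      rw [this]
      exact Ideal.mul_mem_left _ _ (Ideal.subset_span (by simp [monCurveGensOne]))
    · rw [show EOne τ a (b+1) c (d+1) e = EOne τ (a+(τ+1)) b (c+1) d e by simp only [EOne]; ring]
      exact ih (3*(b+(c+1)+d+e)+(c+1)+d) (by omega) _ _ _ _ _ le_rfl
  by_cases hcd : 1 ≤ c ∧ 1 ≤ d
  · obtain ⟨⟨c, rfl⟩, ⟨d, rfl⟩⟩ : (∃ c', c = c' + 1) ∧ (∃ d', d = d' + 1) :=
      ⟨⟨c - 1, by omega⟩, ⟨d - 1, by omega⟩⟩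
    refine htr _ (X 0 ^ a * X 1 ^ (b+1) * X 2 ^ c * X 3 ^ d * X 4 ^ (e+1)) _ ?_ ?_
    · have : X 0 ^ a * X 1 ^ b * X 2 ^ (c+1) * X 3 ^ (d+1) * X 4 ^ e -
          X 0 ^ a * X 1 ^ (b+1) * X 2 ^ c * X 3 ^ d * X 4 ^ (e+1)
          = (X 0 ^ a * X 1 ^ b * X 2 ^ c * X 3 ^ d * X 4 ^ e) *
            ((X 2 : MvPolynomial (Fin 5) k) * X 3 - X 1 * X 4) := by ring
      rw [this]
      exact Ideal.mul_mem_left _ _ (Ideal.subset_span (by simp [monCurveGensOne]))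
    · rw [show EOne τ a b (c+1) (d+1) e = EOne τ a (b+1) c d (e+1) by simp only [EOne]; ring]
      exact ih (3*((b+1)+c+d+(e+1))+c+d) (by omega) _ _ _ _ _ le_rfl
  by_cases hce : 1 ≤ c ∧ 1 ≤ e
  · obtain ⟨⟨c, rfl⟩, ⟨e, rfl⟩⟩ : (∃ c', c = c' + 1) ∧ (∃ e', e = e' + 1) :=
      ⟨⟨c - 1, by omega⟩, ⟨e - 1, by omega⟩⟩
    refine htr _ (X 0 ^ (a+(2*τ+2)) * X 1 ^ b * X 2 ^ c * X 3 ^ d * X 4 ^ e) _ ?_ ?_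
    · have : X 0 ^ a * X 1 ^ b * X 2 ^ (c+1) * X 3 ^ d * X 4 ^ (e+1) -
          X 0 ^ (a+(2*τ+2)) * X 1 ^ b * X 2 ^ c * X 3 ^ d * X 4 ^ e
          = (X 0 ^ a * X 1 ^ b * X 2 ^ c * X 3 ^ d * X 4 ^ e) *
            ((X 2 : MvPolynomial (Fin 5) k) * X 4 - X 0 ^ (2*τ+2)) := by ring
      rw [this]
      exact Ideal.mul_mem_left _ _ (Ideal.subset_span (by simp [monCurveGensOne]))
    · rw [show EOne τ a b (c+1) d (e+1) = EOne τ (a+(2*τ+2)) b c d e by simp only [EOne]; ring]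
      exact ih (3*(b+c+d+e)+c+d) (by omega) _ _ _ _ _ le_rfl
  by_cases hd2 : 2 ≤ d
  · obtain ⟨d, rfl⟩ : ∃ d', d = d' + 2 := ⟨d - 2, by omega⟩
    refine htr _ (X 0 ^ (a+(τ+1)) * X 1 ^ b * X 2 ^ c * X 3 ^ d * X 4 ^ (e+1)) _ ?_ ?_
    · have : X 0 ^ a * X 1 ^ b * X 2 ^ c * X 3 ^ (d+2) * X 4 ^ e -
          X 0 ^ (a+(τ+1)) * X 1 ^ b * X 2 ^ c * X 3 ^ d * X 4 ^ (e+1)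
          = (X 0 ^ a * X 1 ^ b * X 2 ^ c * X 3 ^ d * X 4 ^ e) *
            ((X 3 : MvPolynomial (Fin 5) k) ^ 2 - X 0 ^ (τ+1) * X 4) := by ring
      rw [this]
      exact Ideal.mul_mem_left _ _ (Ideal.subset_span (by simp [monCurveGensOne]))
    · rw [show EOne τ a b c (d+2) e = EOne τ (a+(τ+1)) b c d (e+1) by simp only [EOne]; ring]
      exact ih (3*(b+c+d+(e+1))+c+d) (by omega) _ _ _ _ _ le_rfl
  by_cases hde : 1 ≤ d ∧ 1 ≤ e
  · obtain ⟨⟨d, rfl⟩, ⟨e, rfl⟩⟩ : (∃ d', d = d' + 1) ∧ (∃ e', e = e' + 1) :=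
      ⟨⟨d - 1, by omega⟩, ⟨e - 1, by omega⟩⟩
    refine htr _ (X 0 ^ (a+(τ+2)) * X 1 ^ (b+1) * X 2 ^ c * X 3 ^ d * X 4 ^ e) _ ?_ ?_
    · have : X 0 ^ a * X 1 ^ b * X 2 ^ c * X 3 ^ (d+1) * X 4 ^ (e+1) -
          X 0 ^ (a+(τ+2)) * X 1 ^ (b+1) * X 2 ^ c * X 3 ^ d * X 4 ^ e
          = (X 0 ^ a * X 1 ^ b * X 2 ^ c * X 3 ^ d * X 4 ^ e) *
            ((X 3 : MvPolynomial (Fin 5) k) * X 4 - X 0 ^ (τ+2) * X 1) := by ring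
      rw [this]
      exact Ideal.mul_mem_left _ _ (Ideal.subset_span (by simp [monCurveGensOne]))
    · rw [show EOne τ a b c (d+1) (e+1) = EOne τ (a+(τ+2)) (b+1) c d e by simp only [EOne]; ring]
      exact ih (3*((b+1)+c+d+e)+c+d) (by omega) _ _ _ _ _ le_rfl
  by_cases he2 : 2 ≤ e
  · obtain ⟨e, rfl⟩ : ∃ e', e = e' + 2 := ⟨e - 2, by omega⟩
    refine htr _ (X 0 ^ (a+(τ+2)) * X 1 ^ b * X 2 ^ (c+1) * X 3 ^ d * X 4 ^ e) _ ?_ ?_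
    · have : X 0 ^ a * X 1 ^ b * X 2 ^ c * X 3 ^ d * X 4 ^ (e+2) -
          X 0 ^ (a+(τ+2)) * X 1 ^ b * X 2 ^ (c+1) * X 3 ^ d * X 4 ^ e
          = (X 0 ^ a * X 1 ^ b * X 2 ^ c * X 3 ^ d * X 4 ^ e) *
            ((X 4 : MvPolynomial (Fin 5) k) ^ 2 - X 0 ^ (τ+2) * X 2) := by ring
      rw [this]
      exact Ideal.mul_mem_left _ _ (Ideal.subset_span (by simp [monCurveGensOne]))
    · rw [show EOne τ a b c d (e+2) = EOne τ (a+(τ+2)) b (c+1) d e by simp only [EOne]; ring]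
      exact ih (3*(b+(c+1)+d+e)+(c+1)+d) (by omega) _ _ _ _ _ le_rfl
  -- base cases
  have hbase : (b=0∧c=0∧d=0∧e=0) ∨ (b=1∧c=0∧d=0∧e=0) ∨ (b=0∧c=1∧d=0∧e=0) ∨
      (b=0∧c=0∧d=1∧e=0) ∨ (b=0∧c=0∧d=0∧e=1) ∨ (b=1∧c=0∧d=0∧e=1) := by omega
  rcases hbase with ⟨rfl,rfl,rfl,rfl⟩|⟨rfl,rfl,rfl,rfl⟩|⟨rfl,rfl,rfl,rfl⟩|
    ⟨rfl,rfl,rfl,rfl⟩|⟨rfl,rfl,rfl,rfl⟩|⟨rfl,rfl,rfl,rfl⟩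
  · rw [NfOne_eq0 τ _ a (by simp only [EOne]; omega) (by simp only [EOne]; omega),
      show X 0 ^ a * X 1 ^ 0 * X 2 ^ 0 * X 3 ^ 0 * X 4 ^ 0 = (X 0 ^ a : MvPolynomial (Fin 5) k) by ring,
      sub_self]
    exact I.zero_mem
  · rw [NfOne_eq3 τ _ a (by simp only [EOne]; omega) (by simp only [EOne]; omega),
      show X 0 ^ a * X 1 ^ 1 * X 2 ^ 0 * X 3 ^ 0 * X 4 ^ 0 = (X 0 ^ a * X 1 : MvPolynomial (Fin 5) k) by ring,
      sub_self]
    exact I.zero_mem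
  · rw [NfOne_eq4 τ _ a (by simp only [EOne]; omega) (by simp only [EOne]; omega),
      show X 0 ^ a * X 1 ^ 0 * X 2 ^ 1 * X 3 ^ 0 * X 4 ^ 0 = (X 0 ^ a * X 2 : MvPolynomial (Fin 5) k) by ring,
      sub_self]
    exact I.zero_mem
  · rw [NfOne_eq1 τ _ a (by simp only [EOne]; omega) (by simp only [EOne]; omega),
      show X 0 ^ a * X 1 ^ 0 * X 2 ^ 0 * X 3 ^ 1 * X 4 ^ 0 = (X 0 ^ a * X 3 : MvPolynomial (Fin 5) k) by ring,
      sub_self]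
    exact I.zero_mem
  · rw [NfOne_eq2 τ _ a (by simp only [EOne]; omega) (by simp only [EOne]; omega),
      show X 0 ^ a * X 1 ^ 0 * X 2 ^ 0 * X 3 ^ 0 * X 4 ^ 1 = (X 0 ^ a * X 4 : MvPolynomial (Fin 5) k) by ring,
      sub_self]
    exact I.zero_mem
  · rw [NfOne_eq5 τ _ a (by simp only [EOne]; omega) (by simp only [EOne]; omega),
      show X 0 ^ a * X 1 ^ 1 * X 2 ^ 0 * X 3 ^ 0 * X 4 ^ 1 = (X 0 ^ a * X 1 * X 4 : MvPolynomial (Fin 5) k) by ring,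
      sub_self]
    exact I.zero_mem

lemma PsiOne_monomial (n : ℕ) (c : k) :
    PsiOne k τ (Polynomial.monomial n c) = c • NfOne k τ n :=
  Polynomial.sum_monomial_index c (fun n cc => cc • NfOne k τ n) (zero_smul k _)

lemma phiOne_monomial (v : Fin 5 →₀ ℕ) (c : k) :
    monCurveMapOne k τ (monomial v c)
      = Polynomial.monomial (EOne τ (v 0) (v 1) (v 2) (v 3) (v 4)) c := by
  rw [monCurveMapOne, aeval_monomial, Finsupp.prod_pow, Fin.prod_univ_five]
  simp only [Matrix.cons_val_zero, Matrix.cons_val_one, Matrix.head_cons,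
    Matrix.cons_val_two, Matrix.tail_cons, Matrix.cons_val_three, Matrix.cons_val_four]
  rw [← pow_mul, ← pow_mul, ← pow_mul, ← pow_mul, ← pow_mul,
    ← pow_add, ← pow_add, ← pow_add, ← pow_add]
  rw [show (algebraMap k (Polynomial k)) c = Polynomial.C c from rfl,
    Polynomial.C_mul_X_pow_eq_monomial]
  congr 1
  simp only [EOne]; ring

lemma mainMemOne (p : MvPolynomial (Fin 5) k) :
    p - PsiOne k τ (monCurveMapOne k τ p) ∈ Ideal.span (monCurveGensOne k τ) := by
  have h1 : PsiOne k τ (monCurveMapOne k τ p)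
      = ∑ v ∈ p.support, (coeff v p) • NfOne k τ (EOne τ (v 0) (v 1) (v 2) (v 3) (v 4)) := by
    conv_lhs => rw [p.as_sum, map_sum, map_sum]
    exact Finset.sum_congr rfl fun v hv => by rw [phiOne_monomial, PsiOne_monomial]
  rw [h1]
  nth_rewrite 1 [p.as_sum]
  rw [← Finset.sum_sub_distrib]
  refine Ideal.sum_mem _ fun v hv => ?_
  have hmono : (monomial v) (coeff v p)
      = C (coeff v p) * (X 0 ^ v 0 * X 1 ^ v 1 * X 2 ^ v 2 * X 3 ^ v 3 * X 4 ^ v 4) := by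
    rw [monomial_eq, Finsupp.prod_pow, Fin.prod_univ_five]
  rw [hmono, smul_eq_C_mul, ← mul_sub]
  exact Ideal.mul_mem_left _ _ (redOne τ _ (v 0) (v 1) (v 2) (v 3) (v 4) le_rfl)

end

/-- For an algebraically closed field `k` of characteristic zero and `τ ≥ 1`,
the kernel of `φ : k[X,Y₃,Y₄,Y₇,Y₈] → k[t]`, `X ↦ t^6`, `Y_j ↦ t^{j+6τ}`, is the ideal
generated by the nine binomials listed above. -/
theorem ker_monomial_curve_family_one
    (k : Type*) [Field k] [IsAlgClosed k] [CharZero k] (τ : ℕ) (hτ : 1 ≤ τ) :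
    RingHom.ker (monCurveMapOne k τ).toRingHom = Ideal.span (monCurveGensOne k τ) := by
  refine le_antisymm ?_ ?_
  · intro p hp
    have hp' : monCurveMapOne k τ p = 0 := hp
    have h := mainMemOne (k := k) τ p
    rwa [hp', map_zero, sub_zero] at h
  · refine Ideal.span_le.mpr ?_
    intro g hg
    rw [SetLike.mem_coe, RingHom.mem_ker]
    simp only [monCurveGensOne, Set.mem_insert_iff, Set.mem_singleton_iff] at hg
    rcases hg with rfl|rfl|rfl|rfl|rfl|rfl|rfl|rfl|rfl <;>
      · show monCurveMapOne k τ _ = 0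
        simp only [monCurveMapOne, map_sub, map_mul, map_pow, aeval_X,
          Matrix.cons_val_zero, Matrix.cons_val_one, Matrix.head_cons,
          Matrix.cons_val_two, Matrix.tail_cons, Matrix.cons_val_three, Matrix.cons_val_four]
        ring
end

section
/- Let k be a field and τ ≥ 1 an integer. The subring k[t^6, t^{3+6τ}, t^{4+6τ}, t^{7+6τ}, t^{8+6τ}] of the polynomial ring k[t] is a free module over its subring k[t^6], with basis 1, t^{3+6τ}, t^{4+6τ}, t^{7+6τ}, t^{8+6τ}, t^{11+12τ}. -/
/-!
The exponents `0, 3+6τ, 4+6τ, 7+6τ, 8+6τ, 11+12τ` form the Apéry set of the semigroup with respect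
to `6`: they lie in distinct residue classes mod `6`, and the sum of any two of them is another
one plus a multiple of `6`. The first fact gives linear independence over `k[t^6]`, since the
coefficients of an element of `k[t^6]` vanish outside `6ℕ`. The second makes the `k[t^6]`-span of
the monomials closed under multiplication, so it is a subalgebra, and it contains the generators.
-/

open Polynomial

section

variable {k : Type*} [CommSemiring k] {d : ℕ} {ι : Type*} {e : ι → ℕ}

variable (k d e) in
noncomputable abbrev monomialSpan : Submodule (Algebra.adjoin k {(X : k[X]) ^ d}) k[X] :=
  Submodule.span _ (Set.range fun i => X ^ e i)

theorem coeff_eq_zero_of_mem_adjoin_X_pow {p : k[X]} (hp : p ∈ Algebra.adjoin k {X ^ d})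
    {n : ℕ} (hn : ¬d ∣ n) : p.coeff n = 0 := by
  induction hp using Algebra.adjoin_induction generalizing n with
  | mem x hx =>
    rw [Set.mem_singleton_iff.mp hx, coeff_X_pow, if_neg]
    rintro rfl
    exact hn dvd_rfl
  | algebraMap c =>
    rw [Polynomial.algebraMap_eq, coeff_C, if_neg]
    rintro rfl
    exact hn (dvd_zero d)
  | add x y _ _ hx hy => rw [coeff_add, hx hn, hy hn, add_zero]
  | mul x y _ _ hx hy =>
    rw [coeff_mul]
    refine Finset.sum_eq_zero fun ab hab => ?_
    rw [Finset.HasAntidiagonal.mem_antidiagonal] at hab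
    by_cases ha : d ∣ ab.1
    · rw [hy fun hb => hn (hab ▸ dvd_add ha hb), mul_zero]
    · rw [hx ha, zero_mul]

theorem X_pow_mem_monomialSpan {i : ι} {n : ℕ} (hle : e i ≤ n) (hmod : n ≡ e i [MOD d]) :
    X ^ n ∈ monomialSpan k d e := by
  obtain ⟨c, hc⟩ := (Nat.modEq_iff_dvd' hle).mp hmod.symm
  let r : Algebra.adjoin k {(X : k[X]) ^ d} :=
    ⟨(X ^ d) ^ c, pow_mem (Algebra.self_mem_adjoin_singleton k _) c⟩
  have hr : r • (X : k[X]) ^ e i = X ^ n := by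
    change (X ^ d) ^ c * X ^ e i = _
    rw [← pow_mul, ← pow_add]
    congr 1
    omega
  exact hr ▸ Submodule.smul_mem _ r (Submodule.subset_span ⟨i, rfl⟩)

theorem monomialSpan_mul_self_le
    (hadd : ∀ i j, ∃ l, e l ≤ e i + e j ∧ e i + e j ≡ e l [MOD d]) :
    monomialSpan k d e * monomialSpan k d e ≤ monomialSpan k d e := by
  rw [Submodule.span_mul_span, Submodule.span_le]
  rintro _ ⟨_, ⟨i, rfl⟩, _, ⟨j, rfl⟩, rfl⟩
  obtain ⟨l, hle, hmod⟩ := hadd i j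
  change X ^ e i * X ^ e j ∈ monomialSpan k d e
  rw [← pow_add]
  exact X_pow_mem_monomialSpan hle hmod

theorem adjoin_subset_monomialSpan (hzero : ∃ i, e i = 0)
    (hadd : ∀ i j, ∃ l, e l ≤ e i + e j ∧ e i + e j ≡ e l [MOD d]) {s : Set k[X]}
    (hs : s ⊆ monomialSpan k d e) : (Algebra.adjoin k s : Set k[X]) ⊆ monomialSpan k d e := by
  obtain ⟨i, hi⟩ := hzero
  have hone : (1 : k[X]) ∈ monomialSpan k d e :=
    pow_zero (X : k[X]) ▸ X_pow_mem_monomialSpan (i := i) hi.le (hi ▸ rfl)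
  exact Algebra.adjoin_le (S := ((monomialSpan k d e).restrictScalars k).toSubalgebra hone
    fun x y hx hy => monomialSpan_mul_self_le hadd (Submodule.mul_mem_mul hx hy)) hs

theorem monomialSpan_subset_subalgebra {S : Subalgebra k k[X]} (hd : X ^ d ∈ S)
    (he : ∀ i, X ^ e i ∈ S) : (monomialSpan k d e : Set k[X]) ⊆ S := by
  intro p hp
  induction hp using Submodule.span_induction with
  | mem _ hq =>
    obtain ⟨i, rfl⟩ := hq
    exact he i
  | zero => exact zero_mem S
  | add _ _ _ _ hp hq => exact add_mem hp hq
  | smul r _ _ hq => exact mul_mem (Algebra.adjoin_le (Set.singleton_subset_iff.mpr hd) r.2) hq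

end

theorem linearIndependent_X_pow_of_modEq_injective {k : Type*} [CommRing k] {d : ℕ} {ι : Type*}
    {e : ι → ℕ} (he : ∀ i j, e i ≡ e j [MOD d] → i = j) :
    LinearIndependent (Algebra.adjoin k {(X : k[X]) ^ d}) fun i => (X : k[X]) ^ e i := by
  rw [linearIndependent_iff']
  intro s g hg i hi
  ext1
  ext n
  by_cases hn : d ∣ n
  · have h := congrArg (coeff · (n + e i)) hg
    simp only [finsetSum_coeff, coeff_zero, Subalgebra.smul_def, smul_eq_mul,
      coeff_mul_X_pow'] at h
    rw [Finset.sum_eq_single i, if_pos (Nat.le_add_left _ _), Nat.add_sub_cancel] at h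
    · exact h
    · intro j _ hji
      rw [ite_eq_right_iff]
      intro hle
      refine coeff_eq_zero_of_mem_adjoin_X_pow (g j).2 fun hdvd => hji (he j i ?_)
      exact ((Nat.modEq_iff_dvd' hle).mpr hdvd).trans (Nat.add_modEq_right_iff.mpr hn)
    · exact fun h => absurd hi h
  · exact coeff_eq_zero_of_mem_adjoin_X_pow (g i).2 hn

def aperyExp (τ : ℕ) : Fin 6 → ℕ :=
  ![0, 3 + 6 * τ, 4 + 6 * τ, 7 + 6 * τ, 8 + 6 * τ, 11 + 12 * τ]

theorem aperyExp_modEq_injective (τ : ℕ) :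
    ∀ i j, aperyExp τ i ≡ aperyExp τ j [MOD 6] → i = j := by
  intro i j
  fin_cases i <;> fin_cases j <;> simp [aperyExp, Nat.ModEq] <;> omega

theorem exists_aperyExp_le_add_modEq (τ : ℕ) (i j : Fin 6) :
    ∃ l, aperyExp τ l ≤ aperyExp τ i + aperyExp τ j ∧
      aperyExp τ i + aperyExp τ j ≡ aperyExp τ l [MOD 6] := by
  fin_cases i <;> fin_cases j <;> simp [Fin.exists_fin_succ, aperyExp, Nat.ModEq] <;> omega

theorem semigroup_algebra_free_family_one_general (k : Type*) [Field k] (τ : ℕ) :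
    LinearIndependent
      (Algebra.adjoin k ({Polynomial.X ^ 6} : Set (Polynomial k)))
      (fun i : Fin 6 =>
        (![1, Polynomial.X ^ (3 + 6 * τ), Polynomial.X ^ (4 + 6 * τ),
            Polynomial.X ^ (7 + 6 * τ), Polynomial.X ^ (8 + 6 * τ),
            Polynomial.X ^ (11 + 12 * τ)] i : Polynomial k)) ∧
    (Submodule.span
        (Algebra.adjoin k ({Polynomial.X ^ 6} : Set (Polynomial k)))
        (Set.range fun i : Fin 6 =>
          (![1, Polynomial.X ^ (3 + 6 * τ), Polynomial.X ^ (4 + 6 * τ),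
              Polynomial.X ^ (7 + 6 * τ), Polynomial.X ^ (8 + 6 * τ),
              Polynomial.X ^ (11 + 12 * τ)] i : Polynomial k)) : Set (Polynomial k))
      = (Algebra.adjoin k ({Polynomial.X ^ 6, Polynomial.X ^ (3 + 6 * τ),
          Polynomial.X ^ (4 + 6 * τ), Polynomial.X ^ (7 + 6 * τ),
          Polynomial.X ^ (8 + 6 * τ)} : Set (Polynomial k)) : Set (Polynomial k)) := by
  have hfamily : (fun i : Fin 6 => (![1, X ^ (3 + 6 * τ), X ^ (4 + 6 * τ), X ^ (7 + 6 * τ),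
      X ^ (8 + 6 * τ), X ^ (11 + 12 * τ)] i : k[X])) = fun i => X ^ aperyExp τ i := by
    funext i
    fin_cases i <;> simp [aperyExp]
  rw [hfamily]
  refine ⟨linearIndependent_X_pow_of_modEq_injective (aperyExp_modEq_injective τ),
    Set.Subset.antisymm (monomialSpan_subset_subalgebra (Algebra.subset_adjoin (by simp)) ?_)
      (adjoin_subset_monomialSpan ⟨0, rfl⟩ (exists_aperyExp_le_add_modEq τ) ?_)⟩
  · intro i
    fin_cases i
    · exact one_mem _
    iterate 4 exact Algebra.subset_adjoin (by simp [aperyExp])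
    · show (X : k[X]) ^ (11 + 12 * τ) ∈ _
      rw [show 11 + 12 * τ = (3 + 6 * τ) + (8 + 6 * τ) by ring, pow_add X (3 + 6 * τ)]
      apply Subalgebra.mul_mem <;> apply Algebra.subset_adjoin <;> simp
  · rintro _ (rfl | rfl | rfl | rfl | rfl)
    exacts [X_pow_mem_monomialSpan (i := 0) (by simp [aperyExp]) (by simp [aperyExp, Nat.ModEq]),
      Submodule.subset_span ⟨1, rfl⟩, Submodule.subset_span ⟨2, rfl⟩,
      Submodule.subset_span ⟨3, rfl⟩, Submodule.subset_span ⟨4, rfl⟩]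

/-- For a field `k` and `τ ≥ 1`, the subring
`k[t^6, t^{3+6τ}, t^{4+6τ}, t^{7+6τ}, t^{8+6τ}]` of `k[t]` is a free module over its subring
`k[t^6]`, with basis `1, t^{3+6τ}, t^{4+6τ}, t^{7+6τ}, t^{8+6τ}, t^{11+12τ}`:  these six
elements are linearly independent over `k[t^6]` and their `k[t^6]`-span is the whole subring. -/
theorem semigroup_algebra_free_family_one (k : Type*) [Field k] (τ : ℕ) (hτ : 1 ≤ τ) :
    LinearIndependent
      (Algebra.adjoin k ({Polynomial.X ^ 6} : Set (Polynomial k)))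
      (fun i : Fin 6 =>
        (![1, Polynomial.X ^ (3 + 6 * τ), Polynomial.X ^ (4 + 6 * τ),
            Polynomial.X ^ (7 + 6 * τ), Polynomial.X ^ (8 + 6 * τ),
            Polynomial.X ^ (11 + 12 * τ)] i : Polynomial k)) ∧
    (Submodule.span
        (Algebra.adjoin k ({Polynomial.X ^ 6} : Set (Polynomial k)))
        (Set.range fun i : Fin 6 =>
          (![1, Polynomial.X ^ (3 + 6 * τ), Polynomial.X ^ (4 + 6 * τ),
              Polynomial.X ^ (7 + 6 * τ), Polynomial.X ^ (8 + 6 * τ),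
              Polynomial.X ^ (11 + 12 * τ)] i : Polynomial k)) : Set (Polynomial k))
      = (Algebra.adjoin k ({Polynomial.X ^ 6, Polynomial.X ^ (3 + 6 * τ),
          Polynomial.X ^ (4 + 6 * τ), Polynomial.X ^ (7 + 6 * τ),
          Polynomial.X ^ (8 + 6 * τ)} : Set (Polynomial k)) : Set (Polynomial k)) :=
  semigroup_algebra_free_family_one_general k τ
end

section
/- Let τ ≥ 1 be an integer and let N = ⟨6, 1+6τ, 2+6τ, 3+6τ, 4+6τ⟩ be the additive submonoid of ℕ generated by these five numbers. Then N admits the disjoint decomposition N = 6ℕ ⊔ (1+6τ+6ℕ) ⊔ (2+6τ+6ℕ) ⊔ (3+6τ+6ℕ) ⊔ (4+6τ+6ℕ) ⊔ (5+12τ+6ℕ), where a+6ℕ denotes {a+6k : k ∈ ℕ}. -/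
/-!
The least elements of `N` in the six residue classes modulo `6` (its Apéry set with respect
to `6`) are `w = (0, 1+6τ, 2+6τ, 3+6τ, 4+6τ, 5+12τ)`. They satisfy `w (r + s) ≤ w r + w s`
(indices mod `6`), so the union of the classes `w r + 6ℕ` is closed under addition; it contains
the generators, and conversely every `w r` is a sum of generators
(`5 + 12τ = (1 + 6τ) + (4 + 6τ)`). Disjointness holds because the classes lie in distinct
residues modulo `6`.
-/

def arithProg (a d : ℕ) : Set ℕ := {x | ∃ k, x = a + d * k}

theorem mem_arithProg_iff {a d x : ℕ} : x ∈ arithProg a d ↔ a ≤ x ∧ x ≡ a [MOD d] := by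
  constructor
  · rintro ⟨k, rfl⟩
    exact ⟨Nat.le_add_right a _, by simp [Nat.ModEq]⟩
  · rintro ⟨hax, hmod⟩
    obtain ⟨k, hk⟩ := (Nat.modEq_iff_dvd' hax).1 hmod.symm
    exact ⟨k, by omega⟩

section ResidueClasses

variable {m : ℕ} (w : Fin m → ℕ)

theorem pairwise_disjoint_arithProg (hw : ∀ r, w r % m = r) :
    Pairwise (Function.onFun Disjoint fun r => arithProg (w r) m) := by
  intro r s hrs
  refine Set.disjoint_left.2 fun x hr hs => hrs (Fin.ext ?_)
  rw [← hw r, ← hw s]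
  exact (mem_arithProg_iff.1 hr).2.symm.trans (mem_arithProg_iff.1 hs).2

theorem add_mem_iUnion_arithProg (hw : ∀ r, w r % m = r) (hadd : ∀ r s, w (r + s) ≤ w r + w s)
    {x y : ℕ} (hx : x ∈ ⋃ r, arithProg (w r) m) (hy : y ∈ ⋃ r, arithProg (w r) m) :
    x + y ∈ ⋃ r, arithProg (w r) m := by
  obtain ⟨r, hxr⟩ := Set.mem_iUnion.1 hx
  obtain ⟨s, hys⟩ := Set.mem_iUnion.1 hy
  rw [mem_arithProg_iff] at hxr hys
  have hmod : w (r + s) ≡ w r + w s [MOD m] := by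
    rw [Nat.ModEq, hw, Fin.val_add, Nat.add_mod (w r), hw, hw]
  refine Set.mem_iUnion.2 ⟨r + s, mem_arithProg_iff.2 ⟨?_, ?_⟩⟩
  · linarith [hadd r s]
  · exact (hxr.2.add hys.2).trans hmod.symm

theorem closure_eq_iUnion_arithProg [NeZero m] (hw : ∀ r, w r % m = r) (hw0 : w 0 = 0)
    (hadd : ∀ r s, w (r + s) ≤ w r + w s) {S : Set ℕ} (hS : S ⊆ ⋃ r, arithProg (w r) m)
    (hm : m ∈ AddSubmonoid.closure S) (hwS : ∀ r, w r ∈ AddSubmonoid.closure S) :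
    (AddSubmonoid.closure S : Set ℕ) = ⋃ r, arithProg (w r) m := by
  apply subset_antisymm
  · intro x hx
    induction hx using AddSubmonoid.closure_induction with
    | mem x hx => exact hS hx
    | zero => exact Set.mem_iUnion.2 ⟨0, 0, by simp [hw0]⟩
    | add x y _ _ hx hy => exact add_mem_iUnion_arithProg w hw hadd hx hy
  · rintro x hx
    obtain ⟨r, k, rfl⟩ := Set.mem_iUnion.1 hx
    exact add_mem (hwS r) (by simpa [mul_comm] using nsmul_mem hm k)

end ResidueClasses

def familyTwoApery (τ : ℕ) : Fin 6 → ℕ :=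
  ![0, 1 + 6 * τ, 2 + 6 * τ, 3 + 6 * τ, 4 + 6 * τ, 5 + 12 * τ]

theorem familyTwoApery_mod (τ : ℕ) (r : Fin 6) : familyTwoApery τ r % 6 = r := by
  fin_cases r <;> simp [familyTwoApery, show 12 * τ = 6 * (2 * τ) by ring]

theorem familyTwoApery_add_le (τ : ℕ) (r s : Fin 6) :
    familyTwoApery τ (r + s) ≤ familyTwoApery τ r + familyTwoApery τ s := by
  fin_cases r <;> fin_cases s <;> simp [familyTwoApery] <;> omega

theorem familyTwo_generators_subset (τ : ℕ) :
    ({6, 1 + 6 * τ, 2 + 6 * τ, 3 + 6 * τ, 4 + 6 * τ} : Set ℕ) ⊆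
      ⋃ r, arithProg (familyTwoApery τ r) 6 := by
  rintro x (rfl | rfl | rfl | rfl | rfl)
  exacts [Set.mem_iUnion.2 ⟨0, 1, rfl⟩, Set.mem_iUnion.2 ⟨1, 0, rfl⟩,
    Set.mem_iUnion.2 ⟨2, 0, rfl⟩, Set.mem_iUnion.2 ⟨3, 0, rfl⟩,
    Set.mem_iUnion.2 ⟨4, 0, rfl⟩]

theorem familyTwoApery_mem_closure (τ : ℕ) (r : Fin 6) :
    familyTwoApery τ r ∈
      AddSubmonoid.closure ({6, 1 + 6 * τ, 2 + 6 * τ, 3 + 6 * τ, 4 + 6 * τ} : Set ℕ) := by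
  fin_cases r <;> simp [familyTwoApery]
  iterate 4 exact AddSubmonoid.subset_closure (by simp)
  rw [show 5 + 12 * τ = (1 + 6 * τ) + (4 + 6 * τ) by ring]
  exact add_mem (AddSubmonoid.subset_closure (by simp)) (AddSubmonoid.subset_closure (by simp))

theorem decomposition_family_two_general (τ : ℕ)
    (f : Fin 6 → Set ℕ)
    (hf : f = ![{x : ℕ | ∃ k : ℕ, x = 6 * k},
                {x : ℕ | ∃ k : ℕ, x = 1 + 6 * τ + 6 * k},
                {x : ℕ | ∃ k : ℕ, x = 2 + 6 * τ + 6 * k},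
                {x : ℕ | ∃ k : ℕ, x = 3 + 6 * τ + 6 * k},
                {x : ℕ | ∃ k : ℕ, x = 4 + 6 * τ + 6 * k},
                {x : ℕ | ∃ k : ℕ, x = 5 + 12 * τ + 6 * k}]) :
    (AddSubmonoid.closure ({6, 1 + 6 * τ, 2 + 6 * τ, 3 + 6 * τ, 4 + 6 * τ} : Set ℕ) : Set ℕ)
        = ⋃ i, f i ∧
      Pairwise (Function.onFun Disjoint f) := by
  have hf_arithProg : f = fun r => arithProg (familyTwoApery τ r) 6 := by
    subst hf
    funext r
    fin_cases r <;> simp [familyTwoApery, arithProg]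
  subst hf_arithProg
  exact ⟨closure_eq_iUnion_arithProg _ (familyTwoApery_mod τ) rfl (familyTwoApery_add_le τ)
      (familyTwo_generators_subset τ) (AddSubmonoid.subset_closure (by simp))
      (familyTwoApery_mem_closure τ),
    pairwise_disjoint_arithProg _ (familyTwoApery_mod τ)⟩

/-- For `τ ≥ 1`, the submonoid `N = ⟨6, 1+6τ, 2+6τ, 3+6τ, 4+6τ⟩ ⊆ ℕ` admits
the disjoint decomposition
`N = 6ℕ ⊔ (1+6τ+6ℕ) ⊔ (2+6τ+6ℕ) ⊔ (3+6τ+6ℕ) ⊔ (4+6τ+6ℕ) ⊔ (5+12τ+6ℕ)`. -/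
theorem decomposition_family_two (τ : ℕ) (hτ : 1 ≤ τ)
    (f : Fin 6 → Set ℕ)
    (hf : f = ![{x : ℕ | ∃ k : ℕ, x = 6 * k},
                {x : ℕ | ∃ k : ℕ, x = 1 + 6 * τ + 6 * k},
                {x : ℕ | ∃ k : ℕ, x = 2 + 6 * τ + 6 * k},
                {x : ℕ | ∃ k : ℕ, x = 3 + 6 * τ + 6 * k},
                {x : ℕ | ∃ k : ℕ, x = 4 + 6 * τ + 6 * k},
                {x : ℕ | ∃ k : ℕ, x = 5 + 12 * τ + 6 * k}]) :
    (AddSubmonoid.closure ({6, 1 + 6 * τ, 2 + 6 * τ, 3 + 6 * τ, 4 + 6 * τ} : Set ℕ) : Set ℕ)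
        = ⋃ i, f i ∧
      Pairwise (Function.onFun Disjoint f) :=
  decomposition_family_two_general τ f hf
end

section
/- Let τ ≥ 1 be an integer and let N = ⟨6, 1+6τ, 2+6τ, 3+6τ, 4+6τ⟩. Then N is a numerical semigroup of genus g = 6τ whose largest gap is 12τ−1 = 2g−1; in particular N is symmetric. Moreover {6, 1+6τ, 2+6τ, 3+6τ, 4+6τ} is a minimal system of generators of N, i.e. no proper subset of it generates N. -/
/-!
Every generator other than `6` lies in `[6τ + 1, 6τ + 4]`, so an element of `N` is `6k`, or
`6k` plus one generator (residue `1, …, 4` and at least `6τ`), or at least the sum of two of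
them, which is `≥ 12τ + 2`; the residue `5` is first reached by `(1 + 6τ) + (4 + 6τ)`. Hence
the gaps are the `5τ` non-multiples of `6` below `6τ` together with the `τ` numbers
`≡ 5 (mod 6)` in `[6τ, 12τ)`, the largest being `12τ - 1`. Minimality comes from the same
residue bookkeeping: without `r + 6τ` the residue `r` is not reached below `12τ + 2`, and
without `6` nothing lies strictly between `0` and `6τ + 1`.
-/

open Finset

theorem AddSubmonoid.notMem_closure_of_invariant {M : Type*} [AddMonoid M] {S : Set M}
    (p : M → Prop) (zero : p 0) (add : ∀ a b, p a → p b → p (a + b))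
    (mem : ∀ s ∈ S, p s) {x : M} (hx : ¬ p x) : x ∉ AddSubmonoid.closure S := fun h =>
  hx (AddSubmonoid.closure_induction (motive := fun n _ => p n) mem zero
    (fun a b _ _ ha hb => add a b ha hb) h)

namespace FamilyTwo

def gens (τ : ℕ) : Set ℕ := {6, 1 + 6 * τ, 2 + 6 * τ, 3 + 6 * τ, 4 + 6 * τ}

theorem eq_six_or_mem_Icc_of_mem_gens {τ s : ℕ} (hs : s ∈ gens τ) :
    s = 6 ∨ 6 * τ + 1 ≤ s ∧ s ≤ 6 * τ + 4 := by
  rcases hs with rfl | rfl | rfl | rfl | rfl <;> omega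

def semigroup (τ : ℕ) : AddSubmonoid ℕ := AddSubmonoid.closure (gens τ)

theorem mem_semigroup_iff (τ n : ℕ) :
    n ∈ semigroup τ ↔ n % 6 = 0 ∨ (n % 6 ≠ 5 ∧ 6 * τ ≤ n) ∨ 12 * τ ≤ n := by
  constructor
  · intro h
    induction h using AddSubmonoid.closure_induction with
    | mem x hx =>
      have := eq_six_or_mem_Icc_of_mem_gens hx
      omega
    | zero => omega
    | add _ _ _ _ _ _ => omega
  · have gen_mem : ∀ x ∈ gens τ, x ∈ semigroup τ := fun _ hx => AddSubmonoid.subset_closure hx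
    have mul_six_mem (k : ℕ) : 6 * k ∈ semigroup τ := by
      simpa [mul_comm] using AddSubmonoid.nsmul_mem _ (gen_mem 6 (by simp [gens])) k
    have shifted_mem (r : ℕ) (h1 : 1 ≤ r) (h4 : r ≤ 4) : r + 6 * τ ∈ semigroup τ := by
      apply gen_mem
      interval_cases r <;> simp [gens]
    intro h
    rcases (by omega : n % 6 = 0 ∨ (1 ≤ n % 6 ∧ n % 6 ≤ 4 ∧ 6 * τ ≤ n) ∨
        (n % 6 = 5 ∧ 12 * τ ≤ n)) with h0 | ⟨h1, h4, hle⟩ | ⟨h5, hle⟩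
    · obtain ⟨k, rfl⟩ : ∃ k, n = 6 * k := ⟨n / 6, by omega⟩
      exact mul_six_mem k
    · obtain ⟨k, hk⟩ : ∃ k, n = (n % 6 + 6 * τ) + 6 * k := ⟨(n - 6 * τ) / 6, by omega⟩
      rw [hk]
      exact add_mem (shifted_mem _ h1 h4) (mul_six_mem k)
    · obtain ⟨k, hk⟩ : ∃ k, n = (1 + 6 * τ) + (4 + 6 * τ) + 6 * k :=
        ⟨(n - 12 * τ) / 6, by omega⟩
      rw [hk]
      exact add_mem (add_mem (shifted_mem 1 le_rfl (by norm_num))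
        (shifted_mem 4 (by norm_num) le_rfl)) (mul_six_mem k)

theorem notMem_semigroup_iff (τ n : ℕ) :
    n ∉ semigroup τ ↔ (n % 6 ≠ 0 ∧ n < 6 * τ) ∨ (n % 6 = 5 ∧ n < 12 * τ) := by
  rw [mem_semigroup_iff]
  omega

def gaps (τ : ℕ) : Finset ℕ :=
  (range τ ×ˢ Icc 1 4).image (fun p => 6 * p.1 + p.2) ∪
    (range (2 * τ)).image (fun q => 6 * q + 5)

theorem coe_gaps (τ : ℕ) : (gaps τ : Set ℕ) = (semigroup τ : Set ℕ)ᶜ := by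
  ext n
  simp only [gaps, coe_union, coe_image, coe_product, coe_range, coe_Icc, Set.mem_union,
    Set.mem_image, Set.mem_prod, Set.mem_Iio, Set.mem_Icc, Prod.exists, Set.mem_compl_iff,
    SetLike.mem_coe, notMem_semigroup_iff]
  constructor
  · rintro (⟨q, r, hqr, rfl⟩ | ⟨q, hq, rfl⟩) <;> omega
  · intro h
    by_cases h5 : n % 6 = 5
    · exact Or.inr ⟨n / 6, by omega⟩
    · exact Or.inl ⟨n / 6, n % 6, by omega⟩

theorem card_gaps (τ : ℕ) : #(gaps τ) = 6 * τ := by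
  have disjoint : Disjoint ((range τ ×ˢ Icc 1 4).image (fun p => 6 * p.1 + p.2))
      ((range (2 * τ)).image (fun q => 6 * q + 5)) := by
    simp only [disjoint_left, mem_image, mem_product, mem_range, mem_Icc, Prod.exists]
    rintro _ ⟨q, r, ⟨_, hr⟩, rfl⟩ ⟨q', _, h⟩
    omega
  rw [gaps, card_union_of_disjoint disjoint, card_image_of_injOn, card_image_of_injective,
    card_product, card_range, card_range, Nat.card_Icc]
  · omega
  · intro q q' h
    simp only at h
    omega
  · rintro ⟨q, r⟩ hqr ⟨q', r'⟩ hqr' h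
    simp only [coe_product, coe_range, coe_Icc, Set.mem_prod, Set.mem_Iio, Set.mem_Icc]
      at hqr hqr' h
    simp only [Prod.mk.injEq]
    omega

theorem notMem_closure_gens_diff {τ : ℕ} (hτ : 1 ≤ τ) {x : ℕ} (hx : x ∈ gens τ) :
    x ∉ AddSubmonoid.closure (gens τ \ {x}) := by
  rcases eq_six_or_mem_Icc_of_mem_gens hx with rfl | ⟨hx1, hx4⟩
  · refine AddSubmonoid.notMem_closure_of_invariant (fun n => n = 0 ∨ 6 * τ + 1 ≤ n)
      (by omega) (fun _ _ => by omega) (fun s hs => ?_) (by omega)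
    obtain ⟨hs, hs6⟩ := hs
    have := eq_six_or_mem_Icc_of_mem_gens hs
    simp only [Set.mem_singleton_iff] at hs6
    omega
  · refine AddSubmonoid.notMem_closure_of_invariant
      (fun n => n % 6 = 0 ∨ (n % 6 ≠ x % 6 ∧ 6 * τ + 1 ≤ n) ∨ 12 * τ + 2 ≤ n)
      (by omega) (fun _ _ => by omega) (fun s hs => ?_) (by omega)
    obtain ⟨hs, hsx⟩ := hs
    have := eq_six_or_mem_Icc_of_mem_gens hs
    simp only [Set.mem_singleton_iff] at hsx
    omega

end FamilyTwo

open FamilyTwo in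
/-- For `τ ≥ 1`, `N = ⟨6, 1+6τ, 2+6τ, 3+6τ, 4+6τ⟩` is a numerical semigroup
of genus `g = 6τ` whose largest gap is `12τ−1 = 2g−1` (so `N` is symmetric), and
`{6, 1+6τ, 2+6τ, 3+6τ, 4+6τ}` is a minimal system of generators. -/
theorem family_two_symmetric_minimal (τ : ℕ) (hτ : 1 ≤ τ) :
    ((AddSubmonoid.closure ({6, 1 + 6 * τ, 2 + 6 * τ, 3 + 6 * τ, 4 + 6 * τ} : Set ℕ)
        : Set ℕ))ᶜ.Finite ∧
    ((AddSubmonoid.closure ({6, 1 + 6 * τ, 2 + 6 * τ, 3 + 6 * τ, 4 + 6 * τ} : Set ℕ)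
        : Set ℕ))ᶜ.ncard = 6 * τ ∧
    (12 * τ - 1) ∉
      AddSubmonoid.closure ({6, 1 + 6 * τ, 2 + 6 * τ, 3 + 6 * τ, 4 + 6 * τ} : Set ℕ) ∧
    12 * τ - 1 = 2 * (6 * τ) - 1 ∧
    (∀ ℓ : ℕ, ℓ ∉
        AddSubmonoid.closure ({6, 1 + 6 * τ, 2 + 6 * τ, 3 + 6 * τ, 4 + 6 * τ} : Set ℕ) →
      ℓ ≤ 12 * τ - 1) ∧
    (∀ x ∈ ({6, 1 + 6 * τ, 2 + 6 * τ, 3 + 6 * τ, 4 + 6 * τ} : Set ℕ),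
      x ∉ AddSubmonoid.closure
        (({6, 1 + 6 * τ, 2 + 6 * τ, 3 + 6 * τ, 4 + 6 * τ} : Set ℕ) \ {x})) := by
  have gaps_eq : (semigroup τ : Set ℕ)ᶜ = gaps τ := (coe_gaps τ).symm
  have gaps_ncard : (semigroup τ : Set ℕ)ᶜ.ncard = 6 * τ := by
    rw [gaps_eq, Set.ncard_coe_finset, card_gaps]
  refine ⟨gaps_eq ▸ (gaps τ).finite_toSet, gaps_ncard,
    (notMem_semigroup_iff τ _).2 (by omega), by omega, fun ℓ hℓ => ?_,
    fun _ => notMem_closure_gens_diff hτ⟩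
  have := (notMem_semigroup_iff τ ℓ).1 hℓ
  omega
end
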